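/- arXiv:1412.2949 — 9 statements merged into one kernel-verified Lean document; each statement's English description precedes it below -/
import Mathlib

section
/- If u = (u_n) is a strictly increasing sequence of positive integers such that the ratios q_n = u_n/u_{n-1} tend to infinity, then t_u(T) = {x ∈ T : u_n·x → 0 in T} is uncountable. -/
/-!
Dropping finitely many terms of `u` leaves a sequence `v` with `3 v n < v (n + 1)`. For every
binary sequence `σ` choose integers `M n` so that `M (n + 1) / v (n + 1)` is the first multiple of
`1 / v (n + 1)` at or after `M n / v n`, moved one multiple further when `σ n` holds. The intervals
`[M n / v n, M n / v n + 3 / v (n + 1)]` are then nested and shrink to a point `x σ` with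
`0 ≤ v n * x σ - M n ≤ 3 v n / v (n + 1) → 0`, so `x σ ∈ t_u(𝕋)`. At the first index where `σ`
and `τ` differ the two intervals become disjoint, so `σ ↦ x σ` embeds the Cantor space `ℕ → Bool`
into `t_u(𝕋)`.
-/

open Filter Topology

instance uncountable_nat_bool : Uncountable (ℕ → Bool) := by
  rw [← not_countable_iff, ← Cardinal.mk_le_aleph0_iff, not_le]
  simpa using Cardinal.cantor Cardinal.aleph0

theorem AddCircle.tendsto_coe_zero_of_tendsto_sub_zsmul {ι : Type*} {l : Filter ι} {p : ℝ}
    {y : ι → ℝ} {m : ι → ℤ} (h : Tendsto (fun i => y i - m i • p) l (𝓝 0)) :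
    Tendsto (fun i => (y i : AddCircle p)) l (𝓝 0) := by
  have hcoe : ∀ i, (y i : AddCircle p) = ((y i - m i • p : ℝ) : AddCircle p) := fun i => by
    rw [AddCircle.coe_sub, (AddCircle.coe_eq_zero_iff p).2 ⟨m i, rfl⟩, sub_zero]
  simp only [hcoe]
  exact (continuous_quotient_mk'.tendsto 0).comp h

namespace Eggleston

variable (v : ℕ → ℕ) (σ : ℕ → Bool)

noncomputable def num : ℕ → ℤ
  | 0 => 0
  | n + 1 => ⌈(num n : ℝ) * v (n + 1) / v n⌉ + if σ n then 1 else 0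

noncomputable def lower (n : ℕ) : ℝ := num v σ n / v n

/-- The `3` is `2 + 1`: the next left end lies below `lower n + 2 / v (n + 1)`, and the next
interval is shorter than `1 / v (n + 1)`. -/
noncomputable def upper (n : ℕ) : ℝ := lower v σ n + 3 / v (n + 1)

noncomputable def point : ℝ := ⨆ n, lower v σ n

variable {v σ}

theorem num_congr {τ : ℕ → Bool} {n : ℕ} (h : ∀ k < n, σ k = τ k) : num v σ n = num v τ n := by
  induction n with
  | zero => rfl
  | succ n ih =>
    rw [num, num, ih fun k hk => h k (Nat.lt_succ_of_lt hk), h n n.lt_succ_self]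

theorem num_succ_bounds (n : ℕ) :
    lower v σ n * v (n + 1) ≤ num v σ (n + 1) ∧
      (num v σ (n + 1) : ℝ) < lower v σ n * v (n + 1) + 2 := by
  have hc := Int.le_ceil ((num v σ n : ℝ) * v (n + 1) / v n)
  have hc' := Int.ceil_lt_add_one ((num v σ n : ℝ) * v (n + 1) / v n)
  rw [lower, div_mul_eq_mul_div, num]
  constructor <;> split <;> push_cast <;> linarith

theorem lower_succ_bounds (hv : ∀ n, 0 < v n) (n : ℕ) :
    lower v σ n ≤ lower v σ (n + 1) ∧ lower v σ (n + 1) < lower v σ n + 2 / v (n + 1) := by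
  have hv' : (0 : ℝ) < v (n + 1) := by exact_mod_cast hv (n + 1)
  obtain ⟨hle, hlt⟩ := num_succ_bounds (σ := σ) n
  rw [lower, lower, le_div_iff₀ hv', div_lt_iff₀ hv', add_mul, div_mul_cancel₀ _ hv'.ne']
  exact ⟨hle, hlt⟩

theorem three_div_lt_one_div (hv : ∀ n, 0 < v n) (hgrowth : ∀ n, 3 * v n < v (n + 1)) (n : ℕ) :
    (3 : ℝ) / v (n + 1) < 1 / v n := by
  rw [div_lt_div_iff₀ (by exact_mod_cast hv _) (by exact_mod_cast hv _), one_mul]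
  exact_mod_cast hgrowth n

theorem monotone_lower (hv : ∀ n, 0 < v n) : Monotone (lower v σ) :=
  monotone_nat_of_le_succ fun n => (lower_succ_bounds hv n).1

theorem antitone_upper (hv : ∀ n, 0 < v n) (hgrowth : ∀ n, 3 * v n < v (n + 1)) :
    Antitone (upper v σ) := by
  refine antitone_nat_of_succ_le fun n => ?_
  have := (lower_succ_bounds (σ := σ) hv n).2
  have := three_div_lt_one_div hv hgrowth (n + 1)
  have : (2 : ℝ) / v (n + 1) + 1 / v (n + 1) = 3 / v (n + 1) := by ring
  rw [upper, upper]
  linarith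

theorem lower_le_upper (hv : ∀ n, 0 < v n) (hgrowth : ∀ n, 3 * v n < v (n + 1)) (n m : ℕ) :
    lower v σ n ≤ upper v σ m := by
  have lower_le_upper_self (k : ℕ) : lower v σ k ≤ upper v σ k :=
    le_add_of_nonneg_right (by positivity)
  rcases le_total n m with h | h
  · exact (monotone_lower hv h).trans (lower_le_upper_self m)
  · exact (lower_le_upper_self n).trans (antitone_upper hv hgrowth h)

theorem lower_le_point (hv : ∀ n, 0 < v n) (hgrowth : ∀ n, 3 * v n < v (n + 1)) (n : ℕ) :
    lower v σ n ≤ point v σ :=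
  le_ciSup ⟨upper v σ 0, Set.forall_mem_range.2 fun m => lower_le_upper hv hgrowth m 0⟩ n

theorem point_le_upper (hv : ∀ n, 0 < v n) (hgrowth : ∀ n, 3 * v n < v (n + 1)) (n : ℕ) :
    point v σ ≤ upper v σ n :=
  ciSup_le fun m => lower_le_upper hv hgrowth m n

theorem point_mem_Ico (hv : ∀ n, 0 < v n) (hgrowth : ∀ n, 3 * v n < v (n + 1)) :
    point v σ ∈ Set.Ico 0 1 := by
  have h0 := lower_le_point (σ := σ) hv hgrowth 0
  have h1 := point_le_upper (σ := σ) hv hgrowth 0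
  have h3 := three_div_lt_one_div hv hgrowth 0
  have hv0 : (1 : ℝ) ≤ v 0 := by exact_mod_cast hv 0
  have : (1 : ℝ) / v 0 ≤ 1 := (div_le_one (by positivity)).2 hv0
  simp only [upper, lower, num, Int.cast_zero, zero_div, zero_add] at h0 h1
  exact ⟨h0, by linarith⟩

theorem lower_succ_of_first_diff {τ : ℕ → Bool} {n : ℕ} (hagree : ∀ k < n, σ k = τ k)
    (hσ : σ n = false) (hτ : τ n = true) :
    lower v τ (n + 1) = lower v σ (n + 1) + 1 / v (n + 1) := by
  have hnum : num v τ (n + 1) = num v σ (n + 1) + 1 := by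
    simp [num, num_congr hagree, hσ, hτ]
  rw [lower, lower, hnum, Int.cast_add, Int.cast_one, add_div]

theorem point_lt_of_first_diff (hv : ∀ n, 0 < v n) (hgrowth : ∀ n, 3 * v n < v (n + 1))
    {τ : ℕ → Bool} {n : ℕ} (hagree : ∀ k < n, σ k = τ k) (hσ : σ n = false) (hτ : τ n = true) :
    point v σ < point v τ :=
  calc point v σ ≤ upper v σ (n + 1) := point_le_upper hv hgrowth _
    _ < lower v σ (n + 1) + 1 / v (n + 1) := add_lt_add_right (three_div_lt_one_div hv hgrowth _) _
    _ = lower v τ (n + 1) := (lower_succ_of_first_diff hagree hσ hτ).symm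
    _ ≤ point v τ := lower_le_point hv hgrowth _

theorem strictMono_point (hv : ∀ n, 0 < v n) (hgrowth : ∀ n, 3 * v n < v (n + 1)) :
    StrictMono fun σ : Lex (ℕ → Bool) => point v (ofLex σ) := by
  rintro σ τ ⟨n, hagree, hlt⟩
  obtain ⟨hσ, hτ⟩ := Bool.lt_iff.1 hlt
  exact point_lt_of_first_diff hv hgrowth hagree hσ hτ

theorem tendsto_mul_point_sub_num (hv : ∀ n, 0 < v n) (hgrowth : ∀ n, 3 * v n < v (n + 1))
    (hq : Tendsto (fun n => (v (n + 1) : ℝ) / v n) atTop atTop) :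
    Tendsto (fun n => v n * point v σ - num v σ n) atTop (𝓝 0) := by
  have hlim : Tendsto (fun n => 3 * ((v (n + 1) : ℝ) / v n)⁻¹) atTop (𝓝 0) := by
    simpa using hq.inv_tendsto_atTop.const_mul 3
  refine squeeze_zero (fun n => ?_) (fun n => ?_) hlim
  · have hv' : (0 : ℝ) < v n := by exact_mod_cast hv n
    have := lower_le_point (σ := σ) hv hgrowth n
    rw [lower, div_le_iff₀ hv'] at this
    linarith
  · have hv' : (0 : ℝ) < v n := by exact_mod_cast hv n
    have := point_le_upper (σ := σ) hv hgrowth n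
    rw [upper, lower] at this
    calc v n * point v σ - num v σ n
        ≤ v n * (num v σ n / v n + 3 / v (n + 1)) - num v σ n := by gcongr
      _ = 3 * ((v (n + 1) : ℝ) / v n)⁻¹ := by field_simp; ring

theorem injective_point (hv : ∀ n, 0 < v n) (hgrowth : ∀ n, 3 * v n < v (n + 1)) :
    Function.Injective (point v) := fun _ _ h =>
  toLex.injective ((strictMono_point hv hgrowth).injective h)

end Eggleston

open Eggleston in
theorem not_countable_setOf_tendsto_zsmul_of_growth {v : ℕ → ℕ} (hv : ∀ n, 0 < v n)
    (hgrowth : ∀ n, 3 * v n < v (n + 1))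
    (hq : Tendsto (fun n => (v (n + 1) : ℝ) / v n) atTop atTop) :
    ¬ {x : AddCircle (1 : ℝ) | Tendsto (fun n => (v n : ℤ) • x) atTop (𝓝 0)}.Countable := by
  have hmaps : Set.MapsTo (fun σ => (point v σ : AddCircle (1 : ℝ))) Set.univ
      {x | Tendsto (fun n => (v n : ℤ) • x) atTop (𝓝 0)} := fun σ _ => by
    simp only [Set.mem_ofPred_eq, ← AddCircle.coe_zsmul]
    refine AddCircle.tendsto_coe_zero_of_tendsto_sub_zsmul (m := num v σ) ?_
    simpa [mul_comm] using tendsto_mul_point_sub_num hv hgrowth hq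
  have hinj : Set.InjOn (fun σ => (point v σ : AddCircle (1 : ℝ))) Set.univ := fun σ _ τ _ h =>
    injective_point hv hgrowth <| (AddCircle.coe_eq_coe_iff_of_mem_Ico (a := 0)
      (by simpa using point_mem_Ico hv hgrowth) (by simpa using point_mem_Ico hv hgrowth)).1 h
  exact fun hcount => Set.not_countable_univ (hmaps.countable_of_injOn hinj hcount)

theorem tu_uncountable_of_divergent_ratios_general (u : ℕ → ℕ)
    (hq : Tendsto (fun n => (u (n + 1) : ℝ) / u n) atTop atTop) :
    ¬ {x : AddCircle (1 : ℝ) |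
        Tendsto (fun n => (u n : ℤ) • x) atTop (𝓝 0)}.Countable := by
  obtain ⟨N, hN⟩ := (hq.eventually_ge_atTop 4).exists_forall_of_atTop
  have hpos (n : ℕ) (hn : N ≤ n) : 0 < u n := by
    have := hN n hn
    refine Nat.pos_of_ne_zero fun h => ?_
    norm_num [h] at this
  have hgrowth (n : ℕ) (hn : N ≤ n) : 3 * u n < u (n + 1) := by
    have hu : (0 : ℝ) < u n := by exact_mod_cast hpos n hn
    have := hN n hn
    rw [le_div_iff₀ hu] at this
    have : (3 : ℝ) * u n < u (n + 1) := by linarith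
    exact_mod_cast this
  have hshift : {x : AddCircle (1 : ℝ) | Tendsto (fun n => (u n : ℤ) • x) atTop (𝓝 0)} =
      {x | Tendsto (fun n => (u (n + N) : ℤ) • x) atTop (𝓝 0)} :=
    Set.ext fun x => (tendsto_add_atTop_iff_nat N).symm
  rw [hshift]
  refine not_countable_setOf_tendsto_zsmul_of_growth (fun n => hpos _ (Nat.le_add_left N n))
    (fun n => Nat.add_right_comm n 1 N ▸ hgrowth _ (Nat.le_add_left N n)) ?_
  simpa only [Nat.add_right_comm _ 1 N] using (tendsto_add_atTop_iff_nat N).2 hq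

/-- Eggleston: if `u` is strictly increasing with ratios `u (n+1) / u n` tending
to infinity, then `t_u(𝕋) = {x : u_n • x → 0}` is uncountable. -/
theorem tu_uncountable_of_divergent_ratios (u : ℕ → ℕ) (hu : StrictMono u)
    (hpos : 1 ≤ u 0)
    (hq : Tendsto (fun n => (u (n + 1) : ℝ) / u n) atTop atTop) :
    ¬ {x : AddCircle (1 : ℝ) |
        Tendsto (fun n => (u n : ℤ) • x) atTop (𝓝 0)}.Countable :=
  tu_uncountable_of_divergent_ratios_general u hq
end

section
/- Let u = (u_n) be a strictly increasing sequence of positive integers with Q = sup_n u_n/u_{n-1} < ∞ (where u_0/u_{-1} means u_0). If x ∈ T satisfies ‖x‖ < 1/(2Q) and ‖u_n·x‖ < 1/(2Q) for all n, then x = 0. Here ‖·‖ denotes the distance to the nearest integer of a representative of x in R/Z. -/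
/-!
As long as `m ‖x‖ ≤ 1/2`, the circle norm is linear: `‖m • x‖ = m ‖x‖`. Since each step
`u n ↦ u (n+1)` multiplies by at most `Q`, if `u n ‖x‖ < 1/(2Q)` then `u (n+1) ‖x‖ < 1/2`, so
`‖u (n+1) • x‖ = u (n+1) ‖x‖`, which is `< 1/(2Q)` by hypothesis. By induction (starting from
`‖x‖` and `u 0 ≤ Q`) `u n ‖x‖ < 1/(2Q)` for all `n`, and `u n → ∞` forces `‖x‖ = 0`.
-/

namespace AddCircle

variable {p : ℝ}

theorem exists_coe_eq_and_abs_eq_norm (x : AddCircle p) :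
    ∃ t : ℝ, (t : AddCircle p) = x ∧ |t| = ‖x‖ := by
  induction x using QuotientAddGroup.induction_on with
  | H s =>
    refine ⟨s - round (p⁻¹ * s) * p, ?_, (norm_eq (p := p)).symm⟩
    rw [coe_sub, ← zsmul_eq_mul, coe_zsmul, coe_period, smul_zero, sub_zero]

theorem norm_nsmul_eq_mul_norm (hp : p ≠ 0) {x : AddCircle p} {n : ℕ}
    (h : n * ‖x‖ ≤ |p| / 2) : ‖n • x‖ = n * ‖x‖ := by
  obtain ⟨t, rfl, ht⟩ := exists_coe_eq_and_abs_eq_norm x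
  have hnt : |(n * t : ℝ)| = n * ‖(t : AddCircle p)‖ := by rw [abs_mul, Nat.abs_cast, ht]
  rw [← coe_nsmul, nsmul_eq_mul, (norm_coe_eq_abs_iff (p := p) hp).mpr (hnt ▸ h), hnt]

theorem natCast_mul_norm_lt_of_le_mul (hp : p ≠ 0) {x : AddCircle p} {Q m k : ℕ} {δ : ℝ}
    (hδ : Q * δ ≤ |p| / 2) (hm : m * ‖x‖ < δ) (hk : k ≤ Q * m) (hkx : ‖k • x‖ < δ) :
    k * ‖x‖ < δ := by
  have hkQ : (k : ℝ) * ‖x‖ ≤ |p| / 2 :=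
    calc (k : ℝ) * ‖x‖ ≤ Q * (m * ‖x‖) := by
          rw [← mul_assoc]; gcongr; exact_mod_cast hk
      _ ≤ Q * δ := by gcongr
      _ ≤ |p| / 2 := hδ
  rwa [← norm_nsmul_eq_mul_norm hp hkQ]

theorem natCast_mul_norm_lt_of_bounded_ratios (hp : p ≠ 0) {u : ℕ → ℕ} {Q : ℕ}
    (hQ0 : u 0 ≤ Q) (hQ : ∀ n, u (n + 1) ≤ Q * u n) {x : AddCircle p} {δ : ℝ}
    (hδ : Q * δ ≤ |p| / 2) (hx : ‖x‖ < δ) (hux : ∀ n, ‖u n • x‖ < δ) (n : ℕ) :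
    u n * ‖x‖ < δ := by
  induction n with
  | zero => exact natCast_mul_norm_lt_of_le_mul hp hδ (m := 1) (by simpa) (by simpa) (hux 0)
  | succ n ih => exact natCast_mul_norm_lt_of_le_mul hp hδ ih (hQ n) (hux (n + 1))

end AddCircle

theorem nonpos_of_forall_natCast_mul_lt {a δ : ℝ} (h : ∀ n : ℕ, n * a < δ) : a ≤ 0 := by
  by_contra! ha
  obtain ⟨n, hn⟩ := exists_nat_gt (δ / a)
  exact (h n).not_ge ((div_lt_iff₀ ha).mp hn).le

theorem ball_trivial_of_bounded_ratios_general (u : ℕ → ℕ) (hu : StrictMono u)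
    (Q : ℕ) (hQ0 : u 0 ≤ Q)
    (hQ : ∀ n, u (n + 1) ≤ Q * u n)
    (x : AddCircle (1 : ℝ))
    (hx : ‖x‖ < 1 / (2 * Q))
    (hux : ∀ n, ‖(u n : ℤ) • x‖ < 1 / (2 * Q)) :
    x = 0 := by
  have hδ : (Q : ℝ) * (1 / (2 * Q)) ≤ |(1 : ℝ)| / 2 := by
    rcases eq_or_ne Q 0 with rfl | hQ0
    · norm_num
    · field_simp; simp
  have hux' : ∀ n, ‖u n • x‖ < 1 / (2 * Q) := fun n => by simpa only [natCast_zsmul] using hux n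
  have hbound := AddCircle.natCast_mul_norm_lt_of_bounded_ratios one_ne_zero hQ0 hQ hδ hx hux'
  have hnx : ∀ n : ℕ, n * ‖x‖ < 1 / (2 * Q) := fun n =>
    lt_of_le_of_lt (by gcongr; exact_mod_cast hu.le_apply) (hbound n)
  exact norm_le_zero_iff.mp (nonpos_of_forall_natCast_mul_lt hnx)

/-- Proposition B: if `u` is strictly increasing with all ratios bounded by `Q`
(including `q₀ = u₀ ≤ Q`), and `x ∈ 𝕋` satisfies `‖x‖ < 1/(2Q)` and
`‖u_n • x‖ < 1/(2Q)` for all `n`, then `x = 0`. -/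
theorem ball_trivial_of_bounded_ratios (u : ℕ → ℕ) (hu : StrictMono u)
    (hpos : 1 ≤ u 0) (Q : ℕ) (hQ0 : u 0 ≤ Q)
    (hQ : ∀ n, u (n + 1) ≤ Q * u n)
    (x : AddCircle (1 : ℝ))
    (hx : ‖x‖ < 1 / (2 * Q))
    (hux : ∀ n, ‖(u n : ℤ) • x‖ < 1 / (2 * Q)) :
    x = 0 :=
  ball_trivial_of_bounded_ratios_general u hu Q hQ0 hQ x hx hux
end

section
/- Let u = (u_n) be an a-sequence and x ∈ T with canonical representation x = Σ c_n/u_n. If the support {n : c_n ≠ 0} is infinite and the sequence of ratios {q_n : c_n ≠ 0} is bounded, then x ∉ t_u(T), i.e., u_n·x does not converge to 0 in T. -/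
/-!
Write `y n ∈ [0, 1]` for `u n` times the tail `∑_{k > n} c k / u k`; it represents `u n • x` in `𝕋`,
and with `q = u (n + 1) / u n` it satisfies `q * y n = c (n + 1) + y (n + 1)`.
Call `m = n + 1` good if `c m ≠ 0` and either `c m ≤ q - 2` or `c (m + 1) = 0`; in the latter case
`y (n + 1) ≤ 1 / 2`, so in both cases `q * y n ∈ [1/2, q - 1/2]`, hence `‖u n • x‖ ≥ 1 / (2 q) ≥ 1 / (2 C)`.
Good indices occur infinitely often: past a nonzero digit, a run of nonzero digits that are all `q - 1`
would contradict the canonicity of the representation.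
-/

open Filter Topology

lemma pos_of_strictMono_of_dvd_succ {u : ℕ → ℕ} (hu : StrictMono u)
    (hdvd : ∀ n, u n ∣ u (n + 1)) (n : ℕ) : 0 < u n := by
  have h0 : 0 < u 0 := Nat.pos_of_ne_zero fun h => by
    have h1 : u 0 ∣ u 1 := hdvd 0
    rw [h, zero_dvd_iff] at h1
    have := hu Nat.zero_lt_one
    omega
  exact h0.trans_le (hu.monotone n.zero_le)

lemma two_le_div_of_lt_of_dvd {a b : ℕ} (hab : a < b) (h : a ∣ b) : 2 ≤ b / a := by
  obtain ⟨k, rfl⟩ := h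
  have ha : 0 < a := Nat.pos_of_ne_zero fun h => by simp [h] at hab
  rw [Nat.mul_div_cancel_left k ha]
  by_contra! hk
  interval_cases k <;> omega

lemma summable_and_tsum_le_of_le_sub_succ {f g : ℕ → ℝ} (hf : ∀ k, 0 ≤ f k) (hg : ∀ k, 0 ≤ g k)
    (hfg : ∀ k, f k ≤ g k - g (k + 1)) : Summable f ∧ ∑' k, f k ≤ g 0 := by
  have hpartial (N : ℕ) : ∑ k ∈ Finset.range N, f k ≤ g 0 :=
    calc ∑ k ∈ Finset.range N, f k ≤ ∑ k ∈ Finset.range N, (g k - g (k + 1)) :=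
          Finset.sum_le_sum fun k _ => hfg k
      _ = g 0 - g N := Finset.sum_range_sub' g N
      _ ≤ g 0 := sub_le_self _ (hg N)
  have hs := summable_of_sum_range_le hf hpartial
  exact ⟨hs, hs.tsum_le_of_sum_range_le hpartial⟩

lemma UnitAddCircle.le_norm_coe_of_le_of_le_one_sub {δ y : ℝ} (h₁ : δ ≤ y) (h₂ : y ≤ 1 - δ) :
    δ ≤ ‖(y : AddCircle (1 : ℝ))‖ := by
  rw [UnitAddCircle.norm_eq]
  rcases le_or_gt (round y) 0 with hr | hr
  · have : (round y : ℝ) ≤ 0 := by exact_mod_cast hr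
    exact le_trans (by linarith) (le_abs_self _)
  · have : (1 : ℝ) ≤ round y := by exact_mod_cast hr
    exact le_trans (by linarith) (neg_le_abs _)

lemma Nat.frequently_mem_and_or_succ_not_mem {S D : Set ℕ} (hS : S.Infinite) (hD : D.Infinite) :
    ∃ᶠ m in atTop, m ∈ S ∧ (m ∈ D ∨ m + 1 ∉ S) := by
  rw [frequently_atTop]
  intro N
  by_contra! h
  obtain ⟨n, hnS, hNn⟩ := hS.exists_gt N
  have hrun : ∀ m, n ≤ m → m ∈ S := fun m hm =>
    Nat.le_induction hnS (fun k hk hkS => (h k (by omega) hkS).2) m hm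
  obtain ⟨j, hjD, hnj⟩ := hD.exists_gt n
  exact (h j (by omega) (hrun j hnj.le)).1 hjD

lemma one_div_two_mul_le_norm_coe {y y' q c : ℝ} (hy : y * q = c + y') (hy'₀ : 0 ≤ y')
    (hy'₁ : y' ≤ 1) (hc : 1 ≤ c) (hcq : c + 1 ≤ q) (hroom : c + 2 ≤ q ∨ y' ≤ 1 / 2) :
    1 / (2 * q) ≤ ‖(y : AddCircle (1 : ℝ))‖ := by
  have hq : 0 < q := by linarith
  have hlow : 1 / 2 ≤ y * q := by linarith
  have hup : y * q ≤ q - 1 / 2 := by rcases hroom with h | h <;> linarith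
  apply UnitAddCircle.le_norm_coe_of_le_of_le_one_sub
  · rw [div_le_iff₀ (by positivity)]
    linarith
  · rw [show 1 - 1 / (2 * q) = (q - 1 / 2) / q by field_simp, le_div_iff₀ hq]
    exact hup

noncomputable def digitTail (u c : ℕ → ℕ) (n : ℕ) : ℝ := ∑' k, (c (k + n) : ℝ) / u (k + n)

noncomputable def scaledTail (u c : ℕ → ℕ) (n : ℕ) : ℝ := u n * digitTail u c (n + 1)

section Digits

variable {u c : ℕ → ℕ} (hpos : ∀ n, 0 < u n) (hdvd : ∀ n, u n ∣ u (n + 1))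
  (hdig : ∀ n, c (n + 1) < u (n + 1) / u n)

include hdvd in
lemma cast_mul_div_succ (n : ℕ) : (u n : ℝ) * ((u (n + 1) / u n : ℕ) : ℝ) = u (n + 1) := by
  rw [← Nat.cast_mul, Nat.mul_div_cancel' (hdvd n)]

include hpos hdvd hdig in
lemma digit_div_le_sub (n : ℕ) : (c (n + 1) : ℝ) / u (n + 1) ≤ 1 / u n - 1 / u (n + 1) := by
  have hq := cast_mul_div_succ hdvd n
  have hcq : (c (n + 1) : ℝ) + 1 ≤ ((u (n + 1) / u n : ℕ) : ℝ) := by exact_mod_cast hdig n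
  have hu : (u n : ℝ) ≠ 0 := by exact_mod_cast (hpos n).ne'
  have hq0 : ((u (n + 1) / u n : ℕ) : ℝ) ≠ 0 := by
    have : (0 : ℝ) ≤ c (n + 1) := by positivity
    exact (by linarith : (0 : ℝ) < _).ne'
  calc (c (n + 1) : ℝ) / u (n + 1) ≤ (((u (n + 1) / u n : ℕ) : ℝ) - 1) / u (n + 1) := by
        gcongr; linarith
    _ = 1 / u n - 1 / u (n + 1) := by rw [← hq]; field_simp

include hpos hdvd hdig in
lemma summable_digitTail_and_le (n : ℕ) :
    Summable (fun k => (c (k + (n + 1)) : ℝ) / u (k + (n + 1))) ∧ digitTail u c (n + 1) ≤ 1 / u n := by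
  have h := summable_and_tsum_le_of_le_sub_succ
    (f := fun k => (c (k + (n + 1)) : ℝ) / u (k + (n + 1))) (g := fun k => 1 / (u (k + n) : ℝ))
    (fun k => by positivity) (fun k => by positivity) fun k => by
      simp only [← add_assoc, Nat.add_right_comm k 1 n]
      exact digit_div_le_sub hpos hdvd hdig (k + n)
  rwa [zero_add] at h

include hpos hdvd hdig in
lemma summable_digits : Summable fun k => (c k : ℝ) / u k :=
  (summable_nat_add_iff 1).mp (summable_digitTail_and_le hpos hdvd hdig 0).1

lemma digitTail_nonneg (n : ℕ) : 0 ≤ digitTail u c n :=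
  tsum_nonneg fun k => by positivity

include hpos hdvd hdig in
lemma digitTail_eq_add_succ (n : ℕ) :
    digitTail u c n = c n / u n + digitTail u c (n + 1) := by
  have hs := (summable_nat_add_iff n).mpr (summable_digits hpos hdvd hdig)
  rw [digitTail, hs.tsum_eq_zero_add, digitTail]
  simp only [zero_add, add_right_comm _ 1 n, add_assoc]

lemma scaledTail_nonneg (n : ℕ) : 0 ≤ scaledTail u c n :=
  mul_nonneg (Nat.cast_nonneg _) (digitTail_nonneg _)

include hpos hdvd hdig in
lemma scaledTail_le_one (n : ℕ) : scaledTail u c n ≤ 1 := by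
  have hu : (0 : ℝ) < u n := by exact_mod_cast hpos n
  calc scaledTail u c n ≤ u n * (1 / u n) :=
        mul_le_mul_of_nonneg_left (summable_digitTail_and_le hpos hdvd hdig n).2 hu.le
    _ = 1 := by field_simp

include hpos hdvd hdig in
lemma scaledTail_mul_div_succ (n : ℕ) :
    scaledTail u c n * ((u (n + 1) / u n : ℕ) : ℝ) = c (n + 1) + scaledTail u c (n + 1) := by
  have hu : (u (n + 1) : ℝ) ≠ 0 := by exact_mod_cast (hpos (n + 1)).ne'
  rw [scaledTail, scaledTail, mul_right_comm, cast_mul_div_succ hdvd,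
    digitTail_eq_add_succ hpos hdvd hdig, mul_add, mul_div_cancel₀ _ hu]

include hpos hdvd hdig in
lemma zsmul_coe_tsum_digits (n : ℕ) :
    (u n : ℤ) • ((∑' k, (c k : ℝ) / u k : ℝ) : AddCircle (1 : ℝ)) = (scaledTail u c n : AddCircle (1 : ℝ)) := by
  have hdvd_le : ∀ i ≤ n, u i ∣ u n := fun i hi =>
    Nat.rel_of_forall_rel_succ_of_le (· ∣ ·) hdvd hi
  have hint : (u n : ℝ) * ∑ i ∈ Finset.range (n + 1), (c i : ℝ) / u i
      = ((∑ i ∈ Finset.range (n + 1), c i * (u n / u i) : ℕ) : ℝ) := by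
    rw [Nat.cast_sum, Finset.mul_sum]
    refine Finset.sum_congr rfl fun i hi => ?_
    have hi' : i ≤ n := Nat.lt_succ_iff.mp (Finset.mem_range.mp hi)
    rw [Nat.cast_mul, Nat.cast_div (hdvd_le i hi') (by exact_mod_cast (hpos i).ne')]
    ring
  rw [← (summable_digits hpos hdvd hdig).sum_add_tsum_nat_add (n + 1), ← AddCircle.coe_zsmul,
    zsmul_eq_mul, Int.cast_natCast, mul_add, hint, AddCircle.coe_add, scaledTail, digitTail]
  have : (((∑ i ∈ Finset.range (n + 1), c i * (u n / u i) : ℕ) : ℝ) : AddCircle (1 : ℝ)) = 0 :=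
    (AddCircle.coe_eq_zero_iff _).mpr ⟨_, by rw [zsmul_eq_mul, mul_one, Int.cast_natCast]⟩
  rw [this, zero_add]

include hpos hdvd hdig in
lemma scaledTail_le_half_of_digit_eq_zero (hu : StrictMono u) (n : ℕ) (h : c (n + 1) = 0) :
    scaledTail u c n ≤ 1 / 2 := by
  have hrec := scaledTail_mul_div_succ hpos hdvd hdig n
  rw [h, Nat.cast_zero, zero_add] at hrec
  have hq : (2 : ℝ) ≤ ((u (n + 1) / u n : ℕ) : ℝ) := by
    exact_mod_cast two_le_div_of_lt_of_dvd (hu n.lt_succ_self) (hdvd n)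
  nlinarith [scaledTail_nonneg (u := u) (c := c) n, scaledTail_le_one hpos hdvd hdig (n + 1)]

include hpos hdvd hdig in
lemma one_div_two_mul_le_norm_scaledTail (hu : StrictMono u) (n : ℕ) (hc : c (n + 1) ≠ 0)
    (hroom : c (n + 1) + 2 ≤ u (n + 1) / u n ∨ c (n + 2) = 0) :
    1 / (2 * ((u (n + 1) / u n : ℕ) : ℝ)) ≤ ‖(scaledTail u c n : AddCircle (1 : ℝ))‖ :=
  one_div_two_mul_le_norm_coe (scaledTail_mul_div_succ hpos hdvd hdig n) (scaledTail_nonneg _)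
    (scaledTail_le_one hpos hdvd hdig _) (by exact_mod_cast Nat.one_le_iff_ne_zero.mpr hc)
    (by exact_mod_cast hdig n) (hroom.imp (fun h => by exact_mod_cast h)
      (scaledTail_le_half_of_digit_eq_zero hpos hdvd hdig hu (n + 1)))

end Digits

theorem not_mem_tu_of_bounded_support_general (u : ℕ → ℕ) (hu : StrictMono u)
    (hdvd : ∀ n, u n ∣ u (n + 1))
    (c : ℕ → ℕ)
    (hlt : ∀ n, 1 ≤ n → c n < u n / u (n - 1))
    (hcan : {n : ℕ | 1 ≤ n ∧ c n < u n / u (n - 1) - 1}.Infinite)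
    (x : ℝ) (hx : x = ∑' n : ℕ, (c n : ℝ) / u n)
    (hsupp : {n : ℕ | c n ≠ 0}.Infinite)
    (hbdd : ∃ C : ℕ, ∀ n ∈ {n : ℕ | c n ≠ 0}, u n / u (n - 1) ≤ C) :
    ¬ Tendsto (fun n => (u n : ℤ) • ((x : AddCircle (1 : ℝ))))
        atTop (𝓝 0) := by
  obtain ⟨C, hC⟩ := hbdd
  have hpos := pos_of_strictMono_of_dvd_succ hu hdvd
  have hdig : ∀ n, c (n + 1) < u (n + 1) / u n := fun n => by simpa using hlt (n + 1) n.succ_pos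
  have hCpos : (0 : ℝ) < C := by
    obtain ⟨m, hm, hm₁⟩ := hsupp.exists_gt 0
    exact_mod_cast ((hlt m hm₁).trans_le (hC m hm)).pos
  intro htend
  have hsmall : ∀ᶠ m in atTop, ‖(u (m - 1) : ℤ) • (x : AddCircle (1 : ℝ))‖ < 1 / (2 * C) :=
    (tendsto_sub_atTop_nat 1).eventually <|
      (tendsto_zero_iff_norm_tendsto_zero.mp htend).eventually (gt_mem_nhds (by positivity))
  obtain ⟨m, ⟨hmc, hroom⟩, hm₁, hm⟩ := (Nat.frequently_mem_and_or_succ_not_mem hsupp hcan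
    |>.and_eventually ((eventually_ge_atTop 1).and hsmall)).exists
  obtain ⟨n, rfl⟩ : ∃ n, m = n + 1 := ⟨m - 1, by omega⟩
  simp only [Set.mem_ofPred_eq, Nat.add_sub_cancel, not_not] at hmc hroom hm
  rw [hx, zsmul_coe_tsum_digits hpos hdvd hdig] at hm
  have hgood := one_div_two_mul_le_norm_scaledTail hpos hdvd hdig hu n hmc
    (hroom.imp_left fun h => by omega)
  have hqC : ((u (n + 1) / u n : ℕ) : ℝ) ≤ C := by exact_mod_cast hC (n + 1) hmc
  have hq : (0 : ℝ) < ((u (n + 1) / u n : ℕ) : ℝ) := by exact_mod_cast (hdig n).pos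
  have : 1 / (2 * (C : ℝ)) ≤ 1 / (2 * ((u (n + 1) / u n : ℕ) : ℝ)) :=
    one_div_le_one_div_of_le (by linarith) (by linarith)
  linarith

/-- If `u` is an a-sequence and `x` has canonical representation `∑ c_n / u_n`
with infinite support on which the ratios `q_n = u_n / u_{n-1}` are bounded,
then `u_n • x` does not tend to `0` in `𝕋`. -/
theorem not_mem_tu_of_bounded_support (u : ℕ → ℕ) (hu : StrictMono u)
    (hpos : 1 ≤ u 0) (hdvd : ∀ n, u n ∣ u (n + 1))
    (c : ℕ → ℕ) (hc0 : c 0 = 0)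
    (hlt : ∀ n, 1 ≤ n → c n < u n / u (n - 1))
    (hcan : {n : ℕ | 1 ≤ n ∧ c n < u n / u (n - 1) - 1}.Infinite)
    (x : ℝ) (hx : x = ∑' n : ℕ, (c n : ℝ) / u n)
    (hsupp : {n : ℕ | c n ≠ 0}.Infinite)
    (hbdd : ∃ C : ℕ, ∀ n ∈ {n : ℕ | c n ≠ 0}, u n / u (n - 1) ≤ C) :
    ¬ Tendsto (fun n => (u n : ℤ) • ((x : AddCircle (1 : ℝ))))
        atTop (𝓝 0) :=
  not_mem_tu_of_bounded_support_general u hu hdvd c hlt hcan x hx hsupp hbdd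
end

section
/- Let u = (u_n) be an a-sequence. Then the torsion subgroup of t_u(T) = {x ∈ T : u_n·x → 0} equals the set of x ∈ T whose canonical representation x = Σ c_n/u_n has finite support, i.e., the torsion elements of t_u(T) are exactly those of the form k/u_m for some m ∈ N and integer k. -/
open Filter Topology

/-!
A torsion element `x` has finitely many multiples, and a sequence in a finite subset of a `T1`
space that tends to `0` is eventually `0`; so `u m • x = 0` for some `m`, i.e. `x = k / u m`.
Conversely `u m • x = 0` gives `u n • x = 0` for all `n ≥ m`, because `u m ∣ u n`.
-/

theorem dvd_of_le_of_forall_dvd_succ {u : ℕ → ℕ} (hdvd : ∀ n, u n ∣ u (n + 1)) {m n : ℕ}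
    (hmn : m ≤ n) : u m ∣ u n :=
  Nat.le_induction (dvd_refl _) (fun k _ ih => ih.trans (hdvd k)) n hmn

theorem IsOfFinAddOrder.eventually_zsmul_eq_zero {G α : Type*} [AddGroup G] [TopologicalSpace G]
    [T1Space G] {x : G} {l : Filter α} {a : α → ℤ} (hx : IsOfFinAddOrder x)
    (h : Tendsto (fun i => a i • x) l (𝓝 0)) : ∀ᶠ i in l, a i • x = 0 := by
  have hclosed : IsClosed ((AddSubgroup.zmultiples x : Set G) \ {0}) :=
    (hx.finite_zmultiples.subset Set.sdiff_subset).isClosed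
  filter_upwards [h.eventually_mem (hclosed.isOpen_compl.mem_nhds (by simp))] with i hi
  by_contra hne
  exact hi ⟨AddSubgroup.zsmul_mem_zmultiples x (a i), hne⟩

theorem tendsto_nsmul_of_forall_dvd_succ {G : Type*} [AddMonoid G] [TopologicalSpace G]
    {u : ℕ → ℕ} (hdvd : ∀ n, u n ∣ u (n + 1)) {x : G} {m : ℕ} (hm : u m • x = 0) :
    Tendsto (fun n => u n • x) atTop (𝓝 0) := by
  refine tendsto_const_nhds.congr' ?_
  filter_upwards [eventually_ge_atTop m] with n hmn
  obtain ⟨c, hc⟩ := dvd_of_le_of_forall_dvd_succ hdvd hmn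
  rw [hc, mul_nsmul, hm, nsmul_zero]

theorem AddCircle.nsmul_eq_zero_iff_exists_natCast_div {n : ℕ} (hn : 0 < n)
    {x : AddCircle (1 : ℝ)} :
    n • x = 0 ↔ ∃ k : ℕ, x = (((k : ℝ) / n : ℝ) : AddCircle (1 : ℝ)) := by
  constructor
  · intro h
    obtain ⟨k, -, hk⟩ := (AddCircle.nsmul_eq_zero_iff hn).1 h
    exact ⟨k, by simpa using hk.symm⟩
  · rintro ⟨k, rfl⟩
    rw [← AddCircle.coe_nsmul, nsmul_eq_mul, mul_div_cancel₀ _ (by positivity), ← nsmul_one,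
      AddCircle.coe_nsmul, AddCircle.coe_period, nsmul_zero]

theorem torsion_of_tu_eq_general (u : ℕ → ℕ) (hu : StrictMono u)
    (hdvd : ∀ n, u n ∣ u (n + 1))
    (x : AddCircle (1 : ℝ)) :
    (Tendsto (fun n => (u n : ℤ) • x) atTop (𝓝 0) ∧ IsOfFinAddOrder x) ↔
      ∃ m k : ℕ, x = (((k : ℝ) / u m : ℝ) : AddCircle (1 : ℝ)) := by
  constructor
  · rintro ⟨hlim, hfin⟩
    obtain ⟨m, hm, hpos⟩ :=
      ((hfin.eventually_zsmul_eq_zero hlim).and (eventually_gt_atTop 0)).exists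
    have hum : 0 < u m := (Nat.zero_le _).trans_lt (hu hpos)
    rw [natCast_zsmul] at hm
    exact ⟨m, (AddCircle.nsmul_eq_zero_iff_exists_natCast_div hum).1 hm⟩
  · rintro ⟨m, k, rfl⟩
    rcases Nat.eq_zero_or_pos (u m) with hum | hum
    · simp [hum] -- `k / 0 = 0`, so `x = 0`
    have hm := (AddCircle.nsmul_eq_zero_iff_exists_natCast_div hum).2 ⟨k, rfl⟩
    simp only [natCast_zsmul]
    exact ⟨tendsto_nsmul_of_forall_dvd_succ hdvd hm,
      isOfFinAddOrder_iff_nsmul_eq_zero.2 ⟨u m, hum, hm⟩⟩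

/-- For an a-sequence `u`, the torsion elements of `t_u(𝕋)` are exactly the
elements of the form `k / u_m`. -/
theorem torsion_of_tu_eq (u : ℕ → ℕ) (hu : StrictMono u)
    (hpos : 1 ≤ u 0) (hdvd : ∀ n, u n ∣ u (n + 1))
    (x : AddCircle (1 : ℝ)) :
    (Tendsto (fun n => (u n : ℤ) • x) atTop (𝓝 0) ∧ IsOfFinAddOrder x) ↔
      ∃ m k : ℕ, x = (((k : ℝ) / u m : ℝ) : AddCircle (1 : ℝ)) :=
  torsion_of_tu_eq_general u hu hdvd x
end

section
/- For any sequence of integers u = (u_n) and any prime p, the p-torsion part of t_u(T) = {x ∈ T : u_n·x → 0} is the cyclic (or Prüfer) group Z(p^{n_p(u)}) where n_p(u) = liminf_n v_p(u_n) and v_p is the p-adic valuation; i.e., the torsion subgroup of t_u(T) is ⊕_p Z(p^{n_p(u)}). -/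
/-!
An element `x` of `𝕋` killed by some `p ^ K` has order `p ^ k` for some `k`, hence is `a / p ^ k`.
A sequence in the finite subgroup of `𝕋` killed by a fixed `N` is bounded away from `0` off `0`
(a nonzero element of order dividing `N` has norm at least `1 / N`), so `u n • x → 0` forces
`u n • x = 0` eventually, i.e. `p ^ k ∣ u n` eventually, which for the positive `u n` says
`k ≤ v_p(u n)` eventually, i.e. `k ≤ liminf v_p(u n)`. Each step reverses.
-/

open Filter Topology

namespace ENat

theorem coe_le_liminf_iff {ι : Type*} {l : Filter ι} {f : ι → ℕ∞} {k : ℕ} :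
    (k : ℕ∞) ≤ liminf f l ↔ ∀ᶠ i in l, (k : ℕ∞) ≤ f i := by
  refine ⟨fun hk => ?_, fun h => le_liminf_of_le (by isBoundedDefault) h⟩
  cases k with
  | zero => simp
  | succ j =>
    have hj : (j : ℕ∞) < liminf f l :=
      lt_of_lt_of_le (by exact_mod_cast j.lt_succ_self) hk
    filter_upwards [eventually_lt_of_lt_liminf hj] with i hi
    exact_mod_cast Order.add_one_le_of_lt hi

end ENat

theorem coe_le_liminf_padicValNat_iff {ι : Type*} {l : Filter ι} {p : ℕ} (hp : p ≠ 1)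
    {u : ι → ℕ} (hu : ∀ i, u i ≠ 0) {k : ℕ} :
    (k : ℕ∞) ≤ liminf (fun i => (padicValNat p (u i) : ℕ∞)) l ↔
      ∀ᶠ i in l, p ^ k ∣ u i := by
  simp only [ENat.coe_le_liminf_iff, Nat.cast_le, padicValNat_dvd_iff_le_of_ne_one hp (hu _)]

namespace AddCircle

variable {T : ℝ}

theorem nsmul_coe_div_mul_eq_zero (a n : ℕ) :
    n • (↑((a : ℝ) / n * T) : AddCircle T) = 0 := by
  rcases n.eq_zero_or_pos with rfl | hn
  · simp
  rw [← coe_nsmul, nsmul_eq_mul, ← mul_assoc,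
    mul_div_cancel₀ _ (by positivity : (n : ℝ) ≠ 0)]
  exact (coe_eq_zero_iff T).mpr ⟨a, by simp⟩

variable [Fact (0 < T)]

theorem exists_eq_div_addOrderOf {x : AddCircle T} (hx : IsOfFinAddOrder x) :
    ∃ a : ℕ, x = ↑((a : ℝ) / addOrderOf x * T) :=
  let ⟨a, _, _, ha⟩ := exists_gcd_eq_one_of_isOfFinAddOrder hx
  ⟨a, ha.symm⟩

theorem eventually_eq_zero_of_tendsto_of_nsmul_eq_zero {ι : Type*} {l : Filter ι}
    {y : ι → AddCircle T} {N : ℕ} (hN : 0 < N) (hy : ∀ i, N • y i = 0)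
    (h : Tendsto y l (𝓝 0)) : ∀ᶠ i in l, y i = 0 := by
  have hε : 0 < T / N := div_pos Fact.out (by exact_mod_cast hN)
  filter_upwards [(tendsto_zero_iff_norm_tendsto_zero.mp h).eventually_lt_const hε]
    with i hi
  by_contra hne
  have hfin : IsOfFinAddOrder (y i) :=
    isOfFinAddOrder_iff_nsmul_eq_zero.mpr ⟨N, hN, hy i⟩
  have hord : (addOrderOf (y i) : ℝ) ≤ N := by
    exact_mod_cast Nat.le_of_dvd hN (addOrderOf_dvd_of_nsmul_eq_zero (hy i))
  have hnorm := le_add_order_smul_norm_of_isOfFinAddOrder hfin hne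
  rw [nsmul_eq_mul] at hnorm
  rw [lt_div_iff₀ (by exact_mod_cast hN)] at hi
  nlinarith [norm_nonneg (y i)]

theorem tendsto_zsmul_nhds_zero_iff {ι : Type*} {l : Filter ι} {x : AddCircle T}
    (hx : IsOfFinAddOrder x) (m : ι → ℤ) :
    Tendsto (fun i => m i • x) l (𝓝 0) ↔ ∀ᶠ i in l, (addOrderOf x : ℤ) ∣ m i := by
  simp only [addOrderOf_dvd_iff_zsmul_eq_zero]
  refine ⟨eventually_eq_zero_of_tendsto_of_nsmul_eq_zero hx.addOrderOf_pos
    (fun i => by rw [smul_comm, addOrderOf_nsmul_eq_zero, smul_zero]), fun h => ?_⟩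
  exact tendsto_const_nhds.congr' (h.mono fun i hi => hi.symm)

end AddCircle

/-- The `p`-torsion part of `t_u(𝕋)` is `Z(p^{n_p(u)})` where
`n_p(u) = liminf_n v_p(u_n)`: an element `x` of `p`-power order belongs to
`t_u(𝕋)` iff `x = a / p^k` for some `k` with `k ≤ n_p(u)` (all `k` are allowed,
i.e. the Prüfer group, when `n_p(u) = ∞`). Consequently the torsion subgroup of
`t_u(𝕋)` is `⊕_p Z(p^{n_p(u)})`. -/
theorem p_torsion_of_tu (u : ℕ → ℕ) (hpos : ∀ n, 0 < u n)
    (p : ℕ) (hp : p.Prime) (x : AddCircle (1 : ℝ)) :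
    (Tendsto (fun n => (u n : ℤ) • x) atTop (𝓝 0) ∧
        ∃ k : ℕ, (p ^ k : ℤ) • x = 0) ↔
      ∃ k a : ℕ,
        (k : ℕ∞) ≤ Filter.liminf (fun n => (padicValNat p (u n) : ℕ∞)) atTop ∧
        x = (((a : ℝ) / (p ^ k : ℕ) : ℝ) : AddCircle (1 : ℝ)) := by
  have hu : ∀ n, u n ≠ 0 := fun n => (hpos n).ne'
  constructor
  · rintro ⟨htend, K, hK⟩
    have hdvd : addOrderOf x ∣ p ^ K :=
      addOrderOf_dvd_iff_nsmul_eq_zero.mpr (by rw [← natCast_zsmul]; exact_mod_cast hK)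
    have hfin : IsOfFinAddOrder x :=
      addOrderOf_pos_iff.mp (Nat.pos_of_dvd_of_pos hdvd (pow_pos hp.pos K))
    obtain ⟨k, -, hk⟩ := (Nat.dvd_prime_pow hp).mp hdvd
    obtain ⟨a, ha⟩ := AddCircle.exists_eq_div_addOrderOf hfin
    refine ⟨k, a, ?_, by rw [ha, hk, mul_one]⟩
    rw [AddCircle.tendsto_zsmul_nhds_zero_iff hfin, hk] at htend
    exact (coe_le_liminf_padicValNat_iff hp.ne_one hu).mpr (by exact_mod_cast htend)
  · rintro ⟨k, a, hk, rfl⟩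
    have hx : (p ^ k) • (((a : ℝ) / (p ^ k : ℕ) : ℝ) : AddCircle (1 : ℝ)) = 0 := by
      simpa using AddCircle.nsmul_coe_div_mul_eq_zero (T := 1) a (p ^ k)
    have hfin := isOfFinAddOrder_iff_nsmul_eq_zero.mpr ⟨p ^ k, pow_pos hp.pos k, hx⟩
    refine ⟨?_, k, by exact_mod_cast hx⟩
    rw [AddCircle.tendsto_zsmul_nhds_zero_iff hfin]
    filter_upwards [(coe_le_liminf_padicValNat_iff hp.ne_one hu).mp hk] with n hn
    exact_mod_cast (addOrderOf_dvd_of_nsmul_eq_zero hx).trans hn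
end

section
/- Let u be an a-sequence. The torsion subgroup t(t_u(T)) is dense in t_u(T) with respect to the metric ρ_u(x,y) = sup{d(x,y), sup_n d(u_n·x, u_n·y)}, where d is the quotient metric on T. -/
/-!
Pick `N` with `‖u_n x‖ < ε / 2` for all `n ≥ N`, put `p = u_N`, lift `x` to `r ∈ ℝ` and round:
`y = round (p r) / p` is killed by `p`, hence by every `u_n` with `n ≥ N`, where then
`d(u_n x, u_n y) = ‖u_n x‖`. For `n ≤ N` we have `u_n (x - y) = (u_n / p) (p r - round (p r))`
with `u_n / p ≤ 1`, so `d(u_n x, u_n y) ≤ ‖p x‖ < ε / 2`.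
-/

open Filter Topology

namespace UnitAddCircle

lemma norm_coe_le_abs (t : ℝ) : ‖(t : UnitAddCircle)‖ ≤ |t| :=
  QuotientAddGroup.norm_mk_le_norm

lemma exists_nsmul_eq_zero_forall_norm_nsmul_sub_le (x : UnitAddCircle) (p : ℕ) :
    ∃ y : UnitAddCircle, p • y = 0 ∧ ∀ k ≤ p, ‖k • (x - y)‖ ≤ ‖p • x‖ := by
  rcases Nat.eq_zero_or_pos p with rfl | hp
  · exact ⟨0, zero_nsmul _, fun k hk => by simp [Nat.le_zero.1 hk]⟩
  obtain ⟨r, rfl⟩ := QuotientAddGroup.mk_surjective x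
  have hp' : (p : ℝ) ≠ 0 := by positivity
  set a := round ((p : ℝ) * r)
  have hnorm : ‖p • (r : UnitAddCircle)‖ = |p * r - a| := by
    rw [← AddCircle.coe_nsmul, nsmul_eq_mul, UnitAddCircle.norm_eq]
  refine ⟨((a / p : ℝ) : UnitAddCircle), ?_, fun k hk => ?_⟩
  · rw [← AddCircle.coe_nsmul, AddCircle.coe_eq_zero_iff]
    exact ⟨a, by rw [nsmul_eq_mul, mul_div_cancel₀ _ hp', zsmul_one]⟩
  have hkp : (k : ℝ) / p ≤ 1 := div_le_one_of_le₀ (by exact_mod_cast hk) (Nat.cast_nonneg p)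
  calc ‖k • ((r : UnitAddCircle) - ((a / p : ℝ) : UnitAddCircle))‖
      = ‖(((k / p) * (p * r - a) : ℝ) : UnitAddCircle)‖ := by
        rw [← AddCircle.coe_sub, ← AddCircle.coe_nsmul, nsmul_eq_mul]
        congr 2
        field_simp
    _ ≤ (k / p) * |p * r - a| := by
        refine (norm_coe_le_abs _).trans_eq ?_
        rw [abs_mul, abs_of_nonneg (by positivity)]
    _ ≤ ‖p • (r : UnitAddCircle)‖ := by
        rw [hnorm]
        exact mul_le_of_le_one_left (abs_nonneg _) hkp

end UnitAddCircle

theorem torsion_dense_in_tu_general (u : ℕ → ℕ) (hu : StrictMono u)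
    (hdvd : ∀ n, u n ∣ u (n + 1))
    (x : AddCircle (1 : ℝ))
    (hx : Tendsto (fun n => (u n : ℤ) • x) atTop (𝓝 0))
    (ε : ℝ) (hε : 0 < ε) :
    ∃ y : AddCircle (1 : ℝ),
      Tendsto (fun n => (u n : ℤ) • y) atTop (𝓝 0) ∧
      IsOfFinAddOrder y ∧
      max (dist x y) (⨆ n : ℕ, dist ((u n : ℤ) • x) ((u n : ℤ) • y)) < ε := by
  simp only [natCast_zsmul] at hx ⊢
  obtain ⟨N, hN⟩ := Metric.tendsto_atTop.1 hx (ε / 2) (half_pos hε)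
  simp only [dist_zero_right] at hN
  set p := u (N + 1)
  have hp : 0 < p := (Nat.zero_le _).trans_lt (hu N.succ_pos)
  obtain ⟨y, hpy, hy⟩ := UnitAddCircle.exists_nsmul_eq_zero_forall_norm_nsmul_sub_le x p
  have hy_zero : ∀ n ≥ N + 1, u n • y = 0 := fun n hn => by
    obtain ⟨c, hc⟩ := Nat.rel_of_forall_rel_succ_of_le (· ∣ ·) hdvd hn
    rw [hc, mul_nsmul, hpy, nsmul_zero]
  have hclose : ∀ n, dist (u n • x) (u n • y) ≤ ε / 2 := fun n => by
    rcases le_or_gt n (N + 1) with hn | hn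
    · rw [dist_eq_norm, ← nsmul_sub]
      exact (hy _ (hu.monotone hn)).trans (hN _ N.le_succ).le
    · rw [hy_zero n hn.le, dist_zero_right]
      exact (hN n (by omega)).le
  refine ⟨y, tendsto_const_nhds.congr' ?_, isOfFinAddOrder_iff_nsmul_eq_zero.2 ⟨p, hp, hpy⟩, ?_⟩
  · filter_upwards [eventually_ge_atTop (N + 1)] with n hn using (hy_zero n hn).symm
  refine max_lt ?_ ((ciSup_le hclose).trans_lt (half_lt_self hε))
  calc dist x y = ‖1 • (x - y)‖ := by rw [one_nsmul, dist_eq_norm]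
    _ ≤ ‖p • x‖ := hy 1 hp
    _ < ε := (hN _ N.le_succ).trans (half_lt_self hε)

/-- Proposition D: for an a-sequence `u`, the torsion subgroup `t(t_u(𝕋))` is
dense in `t_u(𝕋)` with respect to the metric
`ρ_u(x,y) = sup{d(x,y), sup_n d(u_n x, u_n y)}`. -/
theorem torsion_dense_in_tu (u : ℕ → ℕ) (hu : StrictMono u)
    (hpos : 1 ≤ u 0) (hdvd : ∀ n, u n ∣ u (n + 1))
    (x : AddCircle (1 : ℝ))
    (hx : Tendsto (fun n => (u n : ℤ) • x) atTop (𝓝 0))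
    (ε : ℝ) (hε : 0 < ε) :
    ∃ y : AddCircle (1 : ℝ),
      Tendsto (fun n => (u n : ℤ) • y) atTop (𝓝 0) ∧
      IsOfFinAddOrder y ∧
      max (dist x y) (⨆ n : ℕ, dist ((u n : ℤ) • x) ((u n : ℤ) • y)) < ε :=
  torsion_dense_in_tu_general u hu hdvd x hx ε hε
end

section
/- Let X be a compact metrizable abelian group with metric δ and v = (v_n) a sequence of continuous characters X → T. Then ρ_v(x,y) = sup{δ(x,y), sup_n d(v_n(x), v_n(y))} defines a metric on X whose topology τ_v is a group topology finer than the original topology, and the metric ρ_v is complete. -/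
open Filter Topology

/-!
`ρ_v` is the supremum of the pseudometrics `δ` and `d(v_n ·, v_n ·)`, which is finite because the
circle is bounded; so it is a metric dominating `δ`. When `δ` is invariant and the `v_n` are
homomorphisms every term is invariant, hence so is `ρ_v`. A `ρ_v`-Cauchy sequence is `δ`-Cauchy,
so it converges in the compact group `X`, and `ρ_v(a, ·)` is lower semicontinuous (a supremum of
continuous functions), which turns the Cauchy bound into `ρ_v`-convergence to the limit.
-/

/-- `ρ_v(x,y) = sup{δ(x,y), sup_n d(v_n x, v_n y)}`. -/
noncomputable def rhoV {X : Type*} [MetricSpace X]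
    (v : ℕ → X → AddCircle (1 : ℝ)) (x y : X) : ℝ :=
  max (dist x y) (⨆ n : ℕ, dist (v n x) (v n y))

theorem bddAbove_range_dist_of_boundedSpace {ι Y : Type*} [PseudoMetricSpace Y] [BoundedSpace Y]
    (f g : ι → Y) : BddAbove (Set.range fun i => dist (f i) (g i)) := by
  obtain ⟨C, hC⟩ := Metric.boundedSpace_iff.mp ‹BoundedSpace Y›
  exact ⟨C, by rintro _ ⟨i, rfl⟩; exact hC _ _⟩

section MetricSpace

variable {X : Type*} [MetricSpace X] {v : ℕ → X → AddCircle (1 : ℝ)}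

theorem rhoV_le_iff {x y : X} {r : ℝ} :
    rhoV v x y ≤ r ↔ dist x y ≤ r ∧ ∀ n, dist (v n x) (v n y) ≤ r := by
  rw [rhoV, max_le_iff, ciSup_le_iff (bddAbove_range_dist_of_boundedSpace _ _)]

theorem dist_le_rhoV (x y : X) : dist x y ≤ rhoV v x y := (rhoV_le_iff.mp le_rfl).1

theorem dist_apply_le_rhoV (n : ℕ) (x y : X) : dist (v n x) (v n y) ≤ rhoV v x y :=
  (rhoV_le_iff.mp le_rfl).2 n

theorem rhoV_nonneg (x y : X) : 0 ≤ rhoV v x y := dist_nonneg.trans (dist_le_rhoV x y)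

theorem rhoV_self (x : X) : rhoV v x x = 0 := by
  simp [rhoV]

theorem rhoV_comm (x y : X) : rhoV v x y = rhoV v y x := by
  simp [rhoV, dist_comm]

theorem rhoV_triangle (x y z : X) : rhoV v x z ≤ rhoV v x y + rhoV v y z :=
  rhoV_le_iff.mpr
    ⟨(dist_triangle x y z).trans (add_le_add (dist_le_rhoV x y) (dist_le_rhoV y z)), fun n =>
      (dist_triangle _ (v n y) _).trans
        (add_le_add (dist_apply_le_rhoV n x y) (dist_apply_le_rhoV n y z))⟩

theorem eq_of_rhoV_eq_zero {x y : X} (h : rhoV v x y = 0) : x = y :=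
  dist_le_zero.mp (h ▸ dist_le_rhoV x y)

theorem exists_rhoV_lt_subset_of_isOpen {s : Set X} (hs : IsOpen s) {x : X} (hx : x ∈ s) :
    ∃ ε > 0, ∀ y, rhoV v x y < ε → y ∈ s := by
  obtain ⟨ε, hε, hball⟩ := Metric.isOpen_iff.mp hs x hx
  exact ⟨ε, hε, fun y hy => hball (Metric.mem_ball'.mpr ((dist_le_rhoV x y).trans_lt hy))⟩

theorem rhoV_le_of_tendsto (hcont : ∀ n, Continuous (v n)) {a x : X} {s : ℕ → X} {r : ℝ}
    (hs : Tendsto s atTop (𝓝 x)) (hr : ∀ᶠ m in atTop, rhoV v a (s m) ≤ r) :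
    rhoV v a x ≤ r := by
  refine rhoV_le_iff.mpr ⟨?_, fun n => ?_⟩
  · exact le_of_tendsto (tendsto_const_nhds.dist hs)
      (hr.mono fun m hm => (dist_le_rhoV _ _).trans hm)
  · exact le_of_tendsto (tendsto_const_nhds.dist (((hcont n).tendsto x).comp hs))
      (hr.mono fun m hm => (dist_apply_le_rhoV n _ _).trans hm)

theorem exists_tendsto_rhoV_of_cauchy [CompleteSpace X] (hcont : ∀ n, Continuous (v n))
    {s : ℕ → X} (hs : ∀ ε > (0 : ℝ), ∃ N, ∀ m ≥ N, ∀ n ≥ N, rhoV v (s m) (s n) < ε) :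
    ∃ x : X, Tendsto (fun n => rhoV v (s n) x) atTop (𝓝 0) := by
  have hcauchy : CauchySeq s := Metric.cauchySeq_iff.mpr fun ε hε =>
    (hs ε hε).imp fun N hN m hm n hn => (dist_le_rhoV _ _).trans_lt (hN m hm n hn)
  obtain ⟨x, hx⟩ := cauchySeq_tendsto_of_complete hcauchy
  refine ⟨x, Metric.tendsto_atTop.mpr fun ε hε => ?_⟩
  obtain ⟨N, hN⟩ := hs (ε / 2) (half_pos hε)
  refine ⟨N, fun n hn => ?_⟩
  have hbound : rhoV v (s n) x ≤ ε / 2 := rhoV_le_of_tendsto hcont hx <|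
    (eventually_ge_atTop N).mono fun m hm => (hN n hn m hm).le
  rw [Real.dist_eq, sub_zero, abs_of_nonneg (rhoV_nonneg _ _)]
  linarith

end MetricSpace

section AddCommGroup

variable {X : Type*} [AddCommGroup X] [MetricSpace X] {v : ℕ → X → AddCircle (1 : ℝ)}

theorem rhoV_add_left (hinv : ∀ a x y : X, dist (a + x) (a + y) = dist x y)
    (hadd : ∀ n, ∀ x y : X, v n (x + y) = v n x + v n y) (a x y : X) :
    rhoV v (a + x) (a + y) = rhoV v x y := by
  simp only [rhoV, hinv, hadd, dist_add_left]

theorem rhoV_neg_neg (hinv : ∀ a x y : X, dist (a + x) (a + y) = dist x y)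
    (hadd : ∀ n, ∀ x y : X, v n (x + y) = v n x + v n y) (x y : X) :
    rhoV v (-x) (-y) = rhoV v x y := by
  have hdist : dist (-x) (-y) = dist x y := by
    rw [← hinv (x + y), add_neg_cancel_right, add_neg_cancel_comm, dist_comm]
  have hneg (n : ℕ) (x : X) : v n (-x) = -v n x := map_neg (AddMonoidHom.mk' (v n) (hadd n)) x
  simp only [rhoV, hdist, hneg, dist_neg_neg]

theorem rhoV_add_zero_le (hinv : ∀ a x y : X, dist (a + x) (a + y) = dist x y)
    (hadd : ∀ n, ∀ x y : X, v n (x + y) = v n x + v n y) (x y : X) :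
    rhoV v (x + y) 0 ≤ rhoV v x 0 + rhoV v y 0 := by
  calc rhoV v (x + y) 0 ≤ rhoV v (y + x) (y + 0) + rhoV v y 0 := by
        simpa only [add_zero, add_comm x y] using rhoV_triangle (x + y) y 0
    _ = rhoV v x 0 + rhoV v y 0 := by rw [rhoV_add_left hinv hadd]

end AddCommGroup

theorem rhoV_metric_group_complete_general {X : Type*} [AddCommGroup X] [MetricSpace X]
    [CompactSpace X]
    (hinv : ∀ a x y : X, dist (a + x) (a + y) = dist x y)
    (v : ℕ → X → AddCircle (1 : ℝ))
    (hcont : ∀ n, Continuous (v n))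
    (hadd : ∀ n, ∀ x y : X, v n (x + y) = v n x + v n y) :
    -- `ρ_v` is a metric
    (∀ x : X, rhoV v x x = 0) ∧
    (∀ x y : X, rhoV v x y = rhoV v y x) ∧
    (∀ x y z : X, rhoV v x z ≤ rhoV v x y + rhoV v y z) ∧
    (∀ x y : X, rhoV v x y = 0 → x = y) ∧
    -- the topology `τ_v` of `ρ_v` is finer than the original topology
    (∀ s : Set X, IsOpen s → ∀ x ∈ s, ∃ ε > 0, ∀ y, rhoV v x y < ε → y ∈ s) ∧
    -- `τ_v` is a group topology (invariant metric, addition continuous at 0)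
    (∀ a x y : X, rhoV v (a + x) (a + y) = rhoV v x y) ∧
    (∀ x y : X, rhoV v (-x) (-y) = rhoV v x y) ∧
    (∀ ε > (0 : ℝ), ∃ δ > (0 : ℝ), ∀ x y : X,
        rhoV v x 0 < δ → rhoV v y 0 < δ → rhoV v (x + y) 0 < ε) ∧
    -- `ρ_v` is complete
    (∀ s : ℕ → X,
        (∀ ε > (0 : ℝ), ∃ N, ∀ m ≥ N, ∀ n ≥ N, rhoV v (s m) (s n) < ε) →
        ∃ x : X, Tendsto (fun n => rhoV v (s n) x) atTop (𝓝 0)) := by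
  refine ⟨rhoV_self, rhoV_comm, rhoV_triangle, fun _ _ => eq_of_rhoV_eq_zero,
    fun _ hs _ hx => exists_rhoV_lt_subset_of_isOpen hs hx, rhoV_add_left hinv hadd,
    rhoV_neg_neg hinv hadd, fun ε hε => ⟨ε / 2, half_pos hε, fun x y hx hy => ?_⟩,
    fun _ => exists_tendsto_rhoV_of_cauchy hcont⟩
  linarith [rhoV_add_zero_le hinv hadd x y]

/-- For a compact metrizable abelian group `X` (with translation-invariant
compatible metric) and a sequence of continuous characters `v_n : X → 𝕋`, the
function `ρ_v` is a metric on `X`, its topology is a group topology finer than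
the original one, and `ρ_v` is complete. -/
theorem rhoV_metric_group_complete {X : Type*} [AddCommGroup X] [MetricSpace X]
    [CompactSpace X] [IsTopologicalAddGroup X]
    (hinv : ∀ a x y : X, dist (a + x) (a + y) = dist x y)
    (v : ℕ → X → AddCircle (1 : ℝ))
    (hcont : ∀ n, Continuous (v n))
    (hadd : ∀ n, ∀ x y : X, v n (x + y) = v n x + v n y) :
    -- `ρ_v` is a metric
    (∀ x : X, rhoV v x x = 0) ∧
    (∀ x y : X, rhoV v x y = rhoV v y x) ∧
    (∀ x y z : X, rhoV v x z ≤ rhoV v x y + rhoV v y z) ∧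
    (∀ x y : X, rhoV v x y = 0 → x = y) ∧
    -- the topology `τ_v` of `ρ_v` is finer than the original topology
    (∀ s : Set X, IsOpen s → ∀ x ∈ s, ∃ ε > 0, ∀ y, rhoV v x y < ε → y ∈ s) ∧
    -- `τ_v` is a group topology (invariant metric, addition continuous at 0)
    (∀ a x y : X, rhoV v (a + x) (a + y) = rhoV v x y) ∧
    (∀ x y : X, rhoV v (-x) (-y) = rhoV v x y) ∧
    (∀ ε > (0 : ℝ), ∃ δ > (0 : ℝ), ∀ x y : X,
        rhoV v x 0 < δ → rhoV v y 0 < δ → rhoV v (x + y) 0 < ε) ∧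
    -- `ρ_v` is complete
    (∀ s : ℕ → X,
        (∀ ε > (0 : ℝ), ∃ N, ∀ m ≥ N, ∀ n ≥ N, rhoV v (s m) (s n) < ε) →
        ∃ x : X, Tendsto (fun n => rhoV v (s n) x) atTop (𝓝 0)) :=
  rhoV_metric_group_complete_general hinv v hcont hadd
end

section
/- Let u be an a-sequence with bounded ratio sequence, q = limsup_n q_n, and suppose the set S* = {m : q_m = q} has bounded gaps between consecutive elements. Then the ball {x ∈ T : ρ_u(x,0) < 1/q} has cardinality continuum, where ρ_u(x,0) = sup{‖x‖, sup_n ‖u_n x‖}. -/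
/-!
Choose indices `M 0 < M 1 < ⋯` in `S*`, beyond the point where `q_n ≤ q`, with gaps at most
`d + 1`, and for `ε : ℕ → Bool` put `P k = M (2k + ε k)` and `x_ε = ∑ (-1)^k / u_{P k + 1}`.
If `P (j-1) < m ≤ P j`, multiplying by `u_m` turns the terms before `j` into integers, and the
remaining alternating tail has absolute value at most
`u_m / u_{P j + 1} - u_m / (2 u_{P (j+1) + 1})`. For `m = P j ∈ S*` this is
`1/q - u_{P j} / (2 u_{P (j+1) + 1}) ≤ 1/q - 1/(2 q^D)`, with `D` depending only on `d`; for
`m < P j` it is at most `1/(2q)`. So every `x_ε` lies in the ball, and distinct `ε` give distinct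
`x_ε` because the terms decay at least geometrically with ratio `1/2`.
-/

open Filter Cardinal

section Alternating

variable {f g : ℕ → ℝ}

theorem tsum_alternating_eq_sum_add_tail (hs : Summable f) (j : ℕ) :
    ∑' i, (-1) ^ i * f i =
      ∑ i ∈ Finset.range j, (-1) ^ i * f i + (-1) ^ j * ∑' i, (-1) ^ i * f (i + j) := by
  rw [← hs.alternating.sum_add_tsum_nat_add j, ← tsum_mul_left]
  congr 1
  exact tsum_congr fun i => by rw [pow_add]; ring

theorem Antitone.abs_tsum_alternating_shift_sub_le (hf : Antitone f) (hs : Summable f)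
    (j : ℕ) : |∑' i, (-1) ^ i * f (i + j) - (f j - f (j + 1))| ≤ f (j + 2) := by
  have h := alternating_series_error_bound (fun i => f (i + j))
    (fun a b hab => hf (by omega)) ((summable_nat_add_iff j).mpr hs) 2
  have hsum : ∑ i ∈ Finset.range 2, (-1) ^ i * f (i + j) = f j - f (j + 1) := by
    simp [Finset.sum_range_succ, add_comm 1 j]
    ring
  rwa [hsum, add_comm 2 j] at h

theorem Antitone.abs_tsum_alternating_shift_le (hf : Antitone f) (hs : Summable f) (j : ℕ) :
    |∑' i, (-1) ^ i * f (i + j)| ≤ f j := by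
  simpa using alternating_series_error_bound (fun i => f (i + j))
    (fun a b hab => hf (by omega)) ((summable_nat_add_iff j).mpr hs) 0

theorem Antitone.abs_tsum_alternating_shift_le_sub_half (hf : Antitone f) (hs : Summable f)
    {j : ℕ} (h2 : 2 * f (j + 2) ≤ f (j + 1)) :
    |∑' i, (-1) ^ i * f (i + j)| ≤ f j - f (j + 1) / 2 := by
  have h := abs_le.mp (hf.abs_tsum_alternating_shift_sub_le hs j)
  have hmono : f (j + 1) ≤ f j := hf j.le_succ
  rw [abs_le]
  constructor <;> linarith

theorem tsum_alternating_ne_of_eqOn_Iio (hf : Antitone f) (hfs : Summable f)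
    (hg : Antitone g) (hgs : Summable g) {k : ℕ} (heq : Set.EqOn f g (Set.Iio k))
    (hlt : g k + f (k + 1) + f (k + 2) < f k) :
    ∑' i, (-1) ^ i * f i ≠ ∑' i, (-1) ^ i * g i := by
  rw [tsum_alternating_eq_sum_add_tail hfs k, tsum_alternating_eq_sum_add_tail hgs k,
    Finset.sum_congr rfl fun i hi => by rw [heq (Finset.mem_range.mp hi)], ne_eq,
    add_right_inj, mul_right_inj' (pow_ne_zero k (by norm_num))]
  have hf' := abs_le.mp (hf.abs_tsum_alternating_shift_sub_le hfs k)
  have hg' := abs_le.mp (hg.abs_tsum_alternating_shift_le hgs k)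
  intro h
  linarith [hf'.1, hg'.2]

end Alternating

structure IsASequence (u : ℕ → ℕ) : Prop where
  strictMono : StrictMono u
  one_le : 1 ≤ u 0
  dvd_succ : ∀ n, u n ∣ u (n + 1)

namespace IsASequence

variable {u : ℕ → ℕ}

theorem pos (hu : IsASequence u) (n : ℕ) : 0 < u n :=
  Nat.lt_of_lt_of_le hu.one_le (hu.strictMono.monotone n.zero_le)

theorem dvd_of_le (hu : IsASequence u) {m n : ℕ} (h : m ≤ n) : u m ∣ u n :=
  Nat.le_induction dvd_rfl (fun k _ ih => ih.trans (hu.dvd_succ k)) n h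

theorem two_mul_le_succ (hu : IsASequence u) (n : ℕ) : 2 * u n ≤ u (n + 1) := by
  obtain ⟨c, hc⟩ := hu.dvd_succ n
  have hlt := hu.strictMono n.lt_succ_self
  rw [hc] at hlt ⊢
  have hc1 : 1 < c := (Nat.lt_mul_iff_one_lt_right (hu.pos n)).mp hlt
  nlinarith

theorem two_pow_mul_le (hu : IsASequence u) {a b t : ℕ} (h : a + t ≤ b) : 2 ^ t * u a ≤ u b := by
  refine le_trans ?_ (hu.strictMono.monotone h)
  induction t with
  | zero => simp
  | succ t ih =>
    calc 2 ^ (t + 1) * u a = 2 * (2 ^ t * u a) := by ring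
      _ ≤ 2 * u (a + t) := Nat.mul_le_mul_left 2 (ih (by omega))
      _ ≤ u (a + t + 1) := hu.two_mul_le_succ _

theorem inv_le_inv_div_two_pow (hu : IsASequence u) {a b t : ℕ} (h : a + t ≤ b) :
    (u b : ℝ)⁻¹ ≤ (u a : ℝ)⁻¹ / 2 ^ t := by
  rw [div_eq_mul_inv, ← mul_inv, inv_le_inv₀ (by exact_mod_cast hu.pos b)
    (by have := hu.pos a; positivity), mul_comm]
  exact_mod_cast hu.two_pow_mul_le h

theorem succ_eq_mul_of_div_eq (hu : IsASequence u) {n q : ℕ} (h : u (n + 1) / u n = q) :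
    u (n + 1) = q * u n :=
  h ▸ (Nat.div_mul_cancel (hu.dvd_succ n)).symm

theorem le_pow_mul_of_le_add (hu : IsASequence u) {N q : ℕ}
    (hq : ∀ n ≥ N, u (n + 1) / u n ≤ q) {a b t : ℕ} (ha : N ≤ a) (hab : b ≤ a + t) :
    u b ≤ q ^ t * u a := by
  refine le_trans (hu.strictMono.monotone hab) ?_
  clear hab
  induction t with
  | zero => simp
  | succ t ih =>
    calc u (a + t + 1) = u (a + t + 1) / u (a + t) * u (a + t) :=
          (Nat.div_mul_cancel (hu.dvd_succ _)).symm
      _ ≤ q * (q ^ t * u a) := Nat.mul_le_mul (hq _ (by omega)) ih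
      _ = q ^ (t + 1) * u a := by ring

end IsASequence

noncomputable def invSeq (u P : ℕ → ℕ) (k : ℕ) : ℝ := (u (P k + 1) : ℝ)⁻¹

noncomputable def altPoint (u P : ℕ → ℕ) : ℝ := ∑' k, (-1) ^ k * invSeq u P k

namespace IsASequence

variable {u P : ℕ → ℕ}

theorem invSeq_pos (hu : IsASequence u) (k : ℕ) : 0 < invSeq u P k := by
  have := hu.pos (P k + 1)
  unfold invSeq
  positivity

theorem two_mul_invSeq_succ_le (hu : IsASequence u) (hP : StrictMono P) (k : ℕ) :
    2 * invSeq u P (k + 1) ≤ invSeq u P k := by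
  have h := hu.inv_le_inv_div_two_pow (t := 1) (Nat.succ_le_succ (hP k.lt_succ_self))
  unfold invSeq
  linarith

theorem antitone_invSeq (hu : IsASequence u) (hP : StrictMono P) : Antitone (invSeq u P) :=
  antitone_nat_of_succ_le fun k => by
    linarith [hu.two_mul_invSeq_succ_le hP k, hu.invSeq_pos (P := P) (k + 1)]

theorem summable_invSeq (hu : IsASequence u) (hP : StrictMono P) : Summable (invSeq u P) := by
  refine summable_of_ratio_norm_eventually_le (r := 1 / 2) (by norm_num) (Eventually.of_forall
    fun k => ?_)
  rw [Real.norm_of_nonneg (hu.invSeq_pos (k + 1)).le, Real.norm_of_nonneg (hu.invSeq_pos k).le]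
  linarith [hu.two_mul_invSeq_succ_le hP k]

theorem abs_tail_le (hu : IsASequence u) (hP : StrictMono P) (j : ℕ) :
    |∑' i, (-1) ^ i * invSeq u P (i + j)| ≤ invSeq u P j - invSeq u P (j + 1) / 2 :=
  (hu.antitone_invSeq hP).abs_tsum_alternating_shift_le_sub_half (hu.summable_invSeq hP)
    (hu.two_mul_invSeq_succ_le hP (j + 1))

theorem norm_zsmul_altPoint_le (hu : IsASequence u) (hP : StrictMono P) {m j : ℕ}
    (hj : ∀ i < j, P i < m) :
    ‖(u m : ℤ) • (altPoint u P : AddCircle (1 : ℝ))‖ ≤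
      u m * (invSeq u P j - invSeq u P (j + 1) / 2) := by
  obtain ⟨z, hz⟩ : ∃ z : ℤ, (u m : ℝ) * ∑ i ∈ Finset.range j, (-1) ^ i * invSeq u P i = z := by
    refine ⟨∑ i ∈ Finset.range j, (-1) ^ i * ((u m / u (P i + 1) : ℕ) : ℤ), ?_⟩
    simp only [Finset.mul_sum, Int.cast_sum, Int.cast_mul, Int.cast_pow, Int.cast_neg,
      Int.cast_one, Int.cast_natCast]
    refine Finset.sum_congr rfl fun i hi => ?_
    rw [Nat.cast_div (hu.dvd_of_le (hj i (Finset.mem_range.mp hi))) (by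
      exact_mod_cast (hu.pos _).ne'), invSeq]
    ring
  have hcoe : (u m : ℤ) • (altPoint u P : AddCircle (1 : ℝ)) =
      ((u m * ((-1) ^ j * ∑' i, (-1) ^ i * invSeq u P (i + j)) : ℝ) : AddCircle (1 : ℝ)) := by
    rw [← AddCircle.coe_zsmul, zsmul_eq_mul, altPoint,
      tsum_alternating_eq_sum_add_tail (hu.summable_invSeq hP) j, Int.cast_natCast, mul_add, hz,
      AddCircle.coe_add, (AddCircle.coe_eq_zero_iff (1 : ℝ)).mpr ⟨z, by simp⟩, zero_add]
  rw [hcoe]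
  refine (QuotientAddGroup.norm_mk_le_norm).trans ?_
  rw [Real.norm_eq_abs, abs_mul, abs_mul, abs_pow, abs_neg, abs_one, one_pow, one_mul,
    Nat.abs_cast]
  exact mul_le_mul_of_nonneg_left (hu.abs_tail_le hP j) (Nat.cast_nonneg _)

theorem norm_zsmul_altPoint_le_max (hu : IsASequence u) (hP : StrictMono P) {q D : ℕ}
    (hq : 0 < q) (hPq : ∀ k, u (P k + 1) = q * u (P k))
    (hD : ∀ k, u (P (k + 1) + 1) ≤ q ^ D * u (P k)) (m : ℕ) :
    ‖(u m : ℤ) • (altPoint u P : AddCircle (1 : ℝ))‖ ≤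
      max (1 / (2 * q) : ℝ) (1 / q - 1 / (2 * q ^ D)) := by
  have hex : ∃ j, m ≤ P j := ⟨m, hP.id_le m⟩
  refine (hu.norm_zsmul_altPoint_le hP fun i hi => not_le.mp (Nat.find_min hex hi)).trans ?_
  set j := Nat.find hex
  have hq' : (0 : ℝ) < q := by exact_mod_cast hq
  have hPj : (0 : ℝ) < u (P j) := by exact_mod_cast hu.pos _
  have hinv : invSeq u P j = 1 / (q * u (P j)) := by
    rw [invSeq, hPq, Nat.cast_mul, one_div]
  have hmj : m ≤ P j := Nat.find_spec hex
  rcases hmj.eq_or_lt with heq | hlt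
  · have hnext : 1 / q ^ D ≤ (u (P j) : ℝ) * invSeq u P (j + 1) := by
      rw [invSeq, ← div_eq_mul_inv, div_le_div_iff₀ (by positivity)
        (by exact_mod_cast hu.pos _), one_mul]
      exact_mod_cast (hD j).trans_eq (mul_comm _ _)
    have hfirst : (u (P j) : ℝ) * invSeq u P j = 1 / q := by
      rw [hinv]
      field_simp
    refine le_max_of_le_right ?_
    rw [heq, mul_sub, hfirst, mul_div_assoc', mul_comm 2, ← div_div]
    linarith
  · have hfirst : (u m : ℝ) * invSeq u P j ≤ 1 / (2 * q) := by
      rw [hinv, ← div_eq_mul_one_div, div_le_div_iff₀ (by positivity) (by positivity), one_mul]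
      have h2 : 2 * u m ≤ u (P j) := by simpa using hu.two_pow_mul_le (t := 1) hlt
      nlinarith [show (2 * u m : ℝ) ≤ u (P j) by exact_mod_cast h2]
    refine le_max_of_le_left ?_
    have := hu.invSeq_pos (P := P) (j + 1)
    have : (0 : ℝ) ≤ u m := Nat.cast_nonneg _
    nlinarith

theorem abs_altPoint_lt (hu : IsASequence u) (hP : StrictMono P) {q : ℕ} (hq : 0 < q)
    (hP0 : u (P 0 + 1) = q * u (P 0)) : |altPoint u P| < 1 / q := by
  have h := hu.abs_tail_le hP 0
  simp only [add_zero, zero_add] at h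
  have h1 := hu.invSeq_pos (P := P) 1
  have h0 : invSeq u P 0 ≤ 1 / q := by
    rw [invSeq, hP0, Nat.cast_mul, one_div]
    have : (1 : ℝ) ≤ u (P 0) := by exact_mod_cast hu.pos _
    have : (0 : ℝ) < q := by exact_mod_cast hq
    gcongr
    nlinarith
  rw [altPoint]
  linarith

theorem altPoint_mem_ball (hu : IsASequence u) (hP : StrictMono P) {q D : ℕ}
    (hq : 0 < q) (hPq : ∀ k, u (P k + 1) = q * u (P k))
    (hD : ∀ k, u (P (k + 1) + 1) ≤ q ^ D * u (P k)) :
    max ‖(altPoint u P : AddCircle (1 : ℝ))‖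
      (⨆ n : ℕ, ‖(u n : ℤ) • (altPoint u P : AddCircle (1 : ℝ))‖) < 1 / q := by
  have hq' : (0 : ℝ) < q := by exact_mod_cast hq
  refine max_lt (QuotientAddGroup.norm_mk_le_norm.trans_lt ?_)
    ((ciSup_le (hu.norm_zsmul_altPoint_le_max hP hq hPq hD)).trans_lt (max_lt ?_ ?_))
  · exact (Real.norm_eq_abs _).trans_lt (hu.abs_altPoint_lt hP hq (hPq 0))
  · rw [one_div_lt_one_div (by positivity) hq']
    linarith
  · have : 0 < 1 / (2 * (q : ℝ) ^ D) := by positivity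
    linarith

end IsASequence

theorem exists_seq_of_bounded_gaps {p : ℕ → Prop} {d : ℕ}
    (h : ∀ m, ∃ k, m ≤ k ∧ k ≤ m + d ∧ p k) (N : ℕ) :
    ∃ M : ℕ → ℕ, (∀ k, p (M k)) ∧ N ≤ M 0 ∧ ∀ k, M k < M (k + 1) ∧ M (k + 1) ≤ M k + (d + 1) := by
  choose F hF₁ hF₂ hF using h
  let M : ℕ → ℕ := fun k => Nat.rec (F N) (fun _ m => F (m + 1)) k
  refine ⟨M, fun k => ?_, hF₁ N, fun k =>
    ⟨hF₁ _, (hF₂ _).trans_eq (by rw [add_assoc, add_comm 1 d])⟩⟩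
  cases k <;> exact hF _

def bitIndex (M : ℕ → ℕ) (ε : ℕ → Bool) (k : ℕ) : ℕ := M (2 * k + (ε k).toNat)

theorem strictMono_bitIndex {M : ℕ → ℕ} (hM : StrictMono M) (ε : ℕ → Bool) :
    StrictMono (bitIndex M ε) :=
  strictMono_nat_of_lt_succ fun k => hM (by have := Bool.toNat_le (ε k); omega)

theorem bitIndex_succ_le {M : ℕ → ℕ} {c : ℕ} (hM : ∀ k, M (k + 1) ≤ M k + c)
    (ε : ℕ → Bool) (k : ℕ) : bitIndex M ε (k + 1) ≤ bitIndex M ε k + 3 * c := by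
  have hMt : ∀ a t, M (a + t) ≤ M a + t * c := fun a t => by
    induction t with
    | zero => simp
    | succ t ih => rw [← add_assoc]; linarith [hM (a + t)]
  have he := Bool.toNat_le (ε k)
  have he' := Bool.toNat_le (ε (k + 1))
  unfold bitIndex
  rw [show 2 * (k + 1) + (ε (k + 1)).toNat =
    2 * k + (ε k).toNat + (2 + (ε (k + 1)).toNat - (ε k).toNat) by omega]
  exact (hMt _ _).trans (Nat.add_le_add_left (Nat.mul_le_mul_right c (by omega)) _)

namespace IsASequence

variable {u M : ℕ → ℕ}

theorem altPoint_bitIndex_ne (hu : IsASequence u) (hM : StrictMono M) {α β : ℕ → Bool} {k : ℕ}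
    (heq : ∀ i < k, α i = β i) (hα : α k = false) (hβ : β k = true) :
    altPoint u (bitIndex M α) ≠ altPoint u (bitIndex M β) := by
  have hPα := strictMono_bitIndex hM α
  have hPβ := strictMono_bitIndex hM β
  refine tsum_alternating_ne_of_eqOn_Iio (k := k) (hu.antitone_invSeq hPα)
    (hu.summable_invSeq hPα) (hu.antitone_invSeq hPβ) (hu.summable_invSeq hPβ)
    (fun i hi => by simp only [invSeq, bitIndex, heq i hi]) ?_
  have hβk : invSeq u (bitIndex M β) k ≤ invSeq u (bitIndex M α) k / 2 ^ 1 :=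
    hu.inv_le_inv_div_two_pow (by
      simp only [bitIndex, hα, hβ, Bool.toNat_false, Bool.toNat_true, add_zero]
      have := hM (show 2 * k < 2 * k + 1 by omega)
      omega)
  have hαk : invSeq u (bitIndex M α) (k + 1) ≤ invSeq u (bitIndex M α) k / 2 ^ 2 :=
    hu.inv_le_inv_div_two_pow (by
      simp only [bitIndex, hα, Bool.toNat_false, add_zero]
      have := hM.add_le_nat 2 (2 * k)
      have := hM.monotone (show 2 + 2 * k ≤ 2 * (k + 1) + (α (k + 1)).toNat by omega)
      omega)
  have := hu.two_mul_invSeq_succ_le hPα (k + 1)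
  have := hu.invSeq_pos (P := bitIndex M α) k
  norm_num at hβk hαk
  linarith

theorem injective_altPoint_bitIndex (hu : IsASequence u) (hM : StrictMono M) :
    Function.Injective fun ε => altPoint u (bitIndex M ε) := by
  intro α β h
  by_contra hne
  have hex : ∃ k, α k ≠ β k := Function.ne_iff.mp hne
  have heq : ∀ i < Nat.find hex, α i = β i := fun i hi => not_not.mp (Nat.find_min hex hi)
  have hk := Nat.find_spec hex
  cases hα : α (Nat.find hex) <;> cases hβ : β (Nat.find hex)
  · exact hk (hα.trans hβ.symm)
  · exact hu.altPoint_bitIndex_ne hM heq hα hβ h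
  · exact hu.altPoint_bitIndex_ne hM (fun i hi => (heq i hi).symm) hβ hα h.symm
  · exact hk (hα.trans hβ.symm)

end IsASequence

theorem AddCircle.coe_injOn_abs_lt_half :
    Set.InjOn ((↑) : ℝ → AddCircle (1 : ℝ)) {x | |x| < 1 / 2} := fun x hx y hy h => by
  have mem : ∀ z : ℝ, |z| < 1 / 2 → z ∈ Set.Ico (-(1 / 2)) (-(1 / 2) + 1) := fun z hz => by
    rw [abs_lt] at hz
    constructor <;> linarith
  exact (AddCircle.coe_eq_coe_iff_of_mem_Ico (mem x hx) (mem y hy)).mp h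

theorem Cardinal.mk_addCircle_le_continuum (p : ℝ) : #(AddCircle p) ≤ 𝔠 :=
  (mk_le_of_surjective QuotientAddGroup.mk_surjective).trans_eq mk_real

/-- Proposition C(b): for an a-sequence `u` with bounded ratios, with
`q = limsup q_n` (so `q_n ≤ q` eventually and `q_n = q` on a set `S*` which
here is assumed to have bounded gaps), the ball
`{x ∈ 𝕋 : ρ_u(x,0) < 1/q}` has cardinality `𝔠`,
where `ρ_u(x,0) = sup{‖x‖, sup_n ‖u_n x‖}`. -/
theorem ball_continuum_of_bounded_gaps (u : ℕ → ℕ) (hu : StrictMono u)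
    (hpos : 1 ≤ u 0) (hdvd : ∀ n, u n ∣ u (n + 1))
    (q : ℕ) (hq2 : 2 ≤ q)
    (hev : ∀ᶠ n in atTop, u (n + 1) / u n ≤ q)
    (hgaps : ∃ d : ℕ, ∀ m : ℕ, ∃ k : ℕ, m ≤ k ∧ k ≤ m + d ∧ u (k + 1) / u k = q) :
    Cardinal.mk {x : AddCircle (1 : ℝ) |
        max ‖x‖ (⨆ n : ℕ, ‖(u n : ℤ) • x‖) < 1 / q} = Cardinal.continuum := by
  have ha : IsASequence u := ⟨hu, hpos, hdvd⟩
  obtain ⟨d, hd⟩ := hgaps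
  obtain ⟨N, hN⟩ := eventually_atTop.mp hev
  obtain ⟨M, hMq, hNM, hM⟩ := exists_seq_of_bounded_gaps hd N
  have hMmono : StrictMono M := strictMono_nat_of_lt_succ fun k => (hM k).1
  have hmem (ε : ℕ → Bool) : ((altPoint u (bitIndex M ε) : ℝ) : AddCircle (1 : ℝ)) ∈
      {x : AddCircle (1 : ℝ) | max ‖x‖ (⨆ n : ℕ, ‖(u n : ℤ) • x‖) < 1 / q} :=
    ha.altPoint_mem_ball (D := 3 * (d + 1) + 1) (strictMono_bitIndex hMmono ε) (by omega)
      (fun k => ha.succ_eq_mul_of_div_eq (hMq _))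
      (fun k => ha.le_pow_mul_of_le_add hN (hNM.trans (hMmono.monotone (Nat.zero_le _)))
        (by have := bitIndex_succ_le (fun k => (hM k).2) ε k; omega))
  have hsmall (ε : ℕ → Bool) : |altPoint u (bitIndex M ε)| < 1 / 2 :=
    (ha.abs_altPoint_lt (strictMono_bitIndex hMmono ε) (by omega) (ha.succ_eq_mul_of_div_eq
      (hMq _))).trans_le (one_div_le_one_div_of_le two_pos (by exact_mod_cast hq2))
  refine le_antisymm ((mk_set_le _).trans (mk_addCircle_le_continuum 1)) ?_
  rw [← show #(ℕ → Bool) = 𝔠 by simp]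
  exact mk_le_of_injective (f := fun ε => ⟨_, hmem ε⟩) fun α β h =>
    ha.injective_altPoint_bitIndex hMmono
      (AddCircle.coe_injOn_abs_lt_half (hsmall α) (hsmall β) (Subtype.ext_iff.mp h))
end

section
/- Let u be an a-sequence with bounded ratio sequence, q = limsup q_n, and suppose the gaps of S* = {m_k : q_{m_k} = q} are unbounded. Then there exist continuum many x ∈ T with ρ_u(x,0) = 1/q. -/
/-! Take `x = ∑ (-1)^k / u (s k + 1)` along indices `s k` with `u (s k + 1) = q * u (s k)` and
fast-growing gaps. For `s k < n`, `u (s k + 1)` divides `u n`, so modulo `1` the number `u n * x` is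
`±u n` times the alternating tail starting at the first `s J ≥ n`. That tail lies between
`u n / u (s J + 1) - u n / u (s (J + 1) + 1)` and `u n / u (s J + 1) ≤ 1 / q`. Hence
`‖u (s J) x‖ → 1 / q`, while `‖u n x‖ ≤ 1 / (2q)` for `n` outside the range of `s`, so `x`
determines that range. Choosing `s k ∈ {e (2k), e (2k+1)}` according to membership of `k` in a
set `A ⊆ ℕ` gives an injection of `Set ℕ` into the sphere. -/

open Filter Topology Cardinal

section Alternating

variable {b : ℕ → ℝ}

theorem Antitone.tsum_alternating_mem_Icc (hb : Antitone b)
    (hs : Summable fun k => (-1 : ℝ) ^ k * b k) :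
    ∑' k, (-1 : ℝ) ^ k * b k ∈ Set.Icc (b 0 - b 1) (b 0) := by
  have h := hs.hasSum.tendsto_sum_nat
  constructor
  · simpa [Finset.sum_range_succ, sub_eq_add_neg] using hb.alternating_series_le_tendsto h 1
  · simpa using hb.tendsto_le_alternating_series h 0

theorem summable_neg_one_pow_mul_of_le_half (h0 : ∀ k, 0 ≤ b k) (hb : ∀ k, b (k + 1) ≤ b k / 2) :
    Summable fun k => (-1 : ℝ) ^ k * b k := by
  refine summable_of_ratio_norm_eventually_le (r := 1 / 2) (by norm_num) (Eventually.of_forall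
    fun k => ?_)
  simp only [norm_mul, norm_pow, norm_neg, norm_one, one_pow, one_mul, Real.norm_of_nonneg (h0 _)]
  linarith [hb k]

theorem tsum_neg_one_pow_mul_eq_sum_add (hs : Summable fun k => (-1 : ℝ) ^ k * b k) (J : ℕ) :
    ∑' k, (-1 : ℝ) ^ k * b k =
      ∑ k ∈ Finset.range J, (-1 : ℝ) ^ k * b k + (-1) ^ J * ∑' i, (-1 : ℝ) ^ i * b (J + i) := by
  rw [← hs.sum_add_tsum_nat_add J, ← tsum_mul_left]
  congr 1
  refine tsum_congr fun i => ?_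
  rw [add_comm i, pow_add]
  ring

end Alternating

theorem exists_mul_sum_neg_one_pow_mul_inv_eq_intCast {d : ℕ → ℕ} {m J : ℕ}
    (hdiv : ∀ k < J, d k ∣ m) :
    ∃ z : ℤ, (m : ℝ) * ∑ k ∈ Finset.range J, (-1 : ℝ) ^ k * (d k : ℝ)⁻¹ = z := by
  refine ⟨∑ k ∈ Finset.range J, (-1) ^ k * ((m / d k : ℕ) : ℤ), ?_⟩
  simp only [Int.cast_sum, Int.cast_mul, Int.cast_pow, Int.cast_neg, Int.cast_one,
    Int.cast_natCast, Finset.mul_sum]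
  refine Finset.sum_congr rfl fun k hk => ?_
  rw [Nat.cast_div_charZero (hdiv k (Finset.mem_range.1 hk))]
  ring

theorem AddCircle.norm_coe_intCast_add_neg_one_pow_mul (z : ℤ) (J : ℕ) {y : ℝ} (h0 : 0 ≤ y)
    (h1 : y ≤ 1 / 2) : ‖((z + (-1) ^ J * y : ℝ) : AddCircle (1 : ℝ))‖ = y := by
  have hy : |(-1) ^ J * y| = y := by simp [abs_mul, abs_of_nonneg h0]
  rw [AddCircle.coe_add, (AddCircle.coe_eq_zero_iff _).2 ⟨z, by simp⟩, zero_add,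
    (AddCircle.norm_coe_eq_abs_iff (p := (1 : ℝ)) one_ne_zero).2 (by simpa [hy] using h1), hy]

section DivisibilityChain

variable {u : ℕ → ℕ}

theorem two_mul_le_succ_of_dvd (hu : StrictMono u) (hdvd : ∀ n, u n ∣ u (n + 1)) (n : ℕ) :
    2 * u n ≤ u (n + 1) := by
  obtain ⟨c, hc⟩ := hdvd n
  have hlt := hu n.lt_succ_self
  rw [hc] at hlt ⊢
  have hc : 2 ≤ c := by
    by_contra! h
    have : u n * c ≤ u n * 1 := Nat.mul_le_mul_left _ (by omega)
    omega
  rw [mul_comm]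
  exact Nat.mul_le_mul_left _ hc

theorem two_pow_mul_le_of_dvd (hu : StrictMono u) (hdvd : ∀ n, u n ∣ u (n + 1)) {m n : ℕ}
    (h : m ≤ n) : 2 ^ (n - m) * u m ≤ u n := by
  induction n, h using Nat.le_induction with
  | base => simp
  | succ n hmn ih =>
    calc 2 ^ (n + 1 - m) * u m = 2 * (2 ^ (n - m) * u m) := by
          rw [Nat.sub_add_comm hmn, pow_succ]; ring
      _ ≤ 2 * u n := Nat.mul_le_mul_left 2 ih
      _ ≤ u (n + 1) := two_mul_le_succ_of_dvd hu hdvd n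

end DivisibilityChain

theorem StrictMono.exists_forall_lt_and_le {s : ℕ → ℕ} (hs : StrictMono s) (n : ℕ) :
    ∃ J, (∀ k < J, s k < n) ∧ n ≤ s J := by
  classical
  have hex : ∃ J, n ≤ s J := ⟨n, hs.id_le n⟩
  exact ⟨Nat.find hex, fun k hk => not_le.1 (Nat.find_min hex hk), Nat.find_spec hex⟩

/-- Gaps of at least `2` let one read `s` off `altSeries u s`; unbounded gaps give `sup = 1 / q`. -/
structure IsSparseSelection (u : ℕ → ℕ) (q : ℕ) (s : ℕ → ℕ) : Prop where
  succ_eq_mul : ∀ k, u (s k + 1) = u (s k) * q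
  add_le : ∀ k, s k + k + 2 ≤ s (k + 1)

/-- The paper's `x_S` for `S = {s k + 1}`, since the paper writes `q_n = u_n / u_{n-1}`. -/
noncomputable def altSeries (u s : ℕ → ℕ) : ℝ :=
  ∑' k, (-1 : ℝ) ^ k * (u (s k + 1) : ℝ)⁻¹

namespace IsSparseSelection

variable {u : ℕ → ℕ} {q : ℕ} {s : ℕ → ℕ}

theorem strictMono (h : IsSparseSelection u q s) : StrictMono s :=
  strictMono_nat_of_lt_succ fun k => by have := h.add_le k; omega

variable (hu : StrictMono u) (hdvd : ∀ n, u n ∣ u (n + 1)) (h : IsSparseSelection u q s)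
include hu h

theorem pos (k : ℕ) : 0 < u (s k) := by
  have hlt := hu (s k).lt_succ_self
  rw [h.succ_eq_mul] at hlt
  exact Nat.pos_of_ne_zero fun h0 => by simp [h0] at hlt

theorem one_lt : 1 < q := by
  have hlt := hu (s 0).lt_succ_self
  rw [h.succ_eq_mul] at hlt
  exact (lt_mul_iff_one_lt_right (h.pos hu 0)).1 hlt

theorem mul_inv_succ_eq (k : ℕ) : (u (s k) : ℝ) * (u (s k + 1) : ℝ)⁻¹ = (q : ℝ)⁻¹ := by
  have := h.pos hu k
  rw [h.succ_eq_mul, Nat.cast_mul, mul_inv, ← mul_assoc, mul_inv_cancel₀ (by positivity), one_mul]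

include hdvd

theorem inv_succ_le (k : ℕ) :
    (u (s (k + 1) + 1) : ℝ)⁻¹ ≤ (1 / 2) ^ (k + 2) * (u (s k + 1) : ℝ)⁻¹ := by
  have hgap := h.add_le k
  have hnat : 2 ^ (k + 2) * u (s k + 1) ≤ u (s (k + 1) + 1) :=
    calc 2 ^ (k + 2) * u (s k + 1) ≤ 2 ^ (s (k + 1) + 1 - (s k + 1)) * u (s k + 1) :=
          Nat.mul_le_mul_right _ (Nat.pow_le_pow_right two_pos (by omega))
      _ ≤ u (s (k + 1) + 1) := two_pow_mul_le_of_dvd hu hdvd (by omega)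
  have hpos : (0 : ℝ) < u (s k + 1) := by exact_mod_cast Nat.zero_lt_of_lt (hu (s k).lt_succ_self)
  rw [one_div, inv_pow, ← mul_inv]
  exact inv_anti₀ (by positivity) (by exact_mod_cast hnat)

theorem inv_succ_le_half (k : ℕ) :
    (u (s (k + 1) + 1) : ℝ)⁻¹ ≤ (u (s k + 1) : ℝ)⁻¹ / 2 :=
  calc _ ≤ (1 / 2) ^ (k + 2) * (u (s k + 1) : ℝ)⁻¹ := h.inv_succ_le hu hdvd k
    _ ≤ (1 / 2) ^ 1 * (u (s k + 1) : ℝ)⁻¹ :=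
        mul_le_mul_of_nonneg_right (pow_le_pow_of_le_one (by norm_num) (by norm_num) (by omega))
          (by positivity)
    _ = _ := by ring

theorem summable : Summable fun k => (-1 : ℝ) ^ k * (u (s k + 1) : ℝ)⁻¹ :=
  summable_neg_one_pow_mul_of_le_half (fun _ => by positivity) (h.inv_succ_le_half hu hdvd)

theorem tail_mem_Icc (J : ℕ) :
    ∑' i, (-1 : ℝ) ^ i * (u (s (J + i) + 1) : ℝ)⁻¹ ∈
      Set.Icc ((u (s J + 1) : ℝ)⁻¹ - (u (s (J + 1) + 1) : ℝ)⁻¹) (u (s J + 1) : ℝ)⁻¹ := by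
  have h0 (i : ℕ) : (0 : ℝ) ≤ (u (s (J + i) + 1) : ℝ)⁻¹ := by positivity
  have hhalf (i : ℕ) : (u (s (J + (i + 1)) + 1) : ℝ)⁻¹ ≤ (u (s (J + i) + 1) : ℝ)⁻¹ / 2 :=
    h.inv_succ_le_half hu hdvd (J + i)
  exact Antitone.tsum_alternating_mem_Icc
    (antitone_nat_of_succ_le fun i => by linarith [hhalf i, h0 i])
    (summable_neg_one_pow_mul_of_le_half h0 hhalf)

theorem norm_zsmul_mem_Icc {m J : ℕ} (hdiv : ∀ k < J, u (s k + 1) ∣ m) (hm : m ≤ u (s J)) :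
    ‖(m : ℤ) • (altSeries u s : AddCircle (1 : ℝ))‖ ∈
      Set.Icc (m * ((u (s J + 1) : ℝ)⁻¹ - (u (s (J + 1) + 1) : ℝ)⁻¹))
        (m * (u (s J + 1) : ℝ)⁻¹) := by
  set T := ∑' i, (-1 : ℝ) ^ i * (u (s (J + i) + 1) : ℝ)⁻¹
  have hT := h.tail_mem_Icc hu hdvd J
  have hT0 : 0 ≤ T := (sub_nonneg.2 ((h.inv_succ_le_half hu hdvd J).trans
    (half_le_self (by positivity)))).trans hT.1
  have hmT : m * T ≤ 1 / 2 :=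
    calc m * T ≤ u (s J) * (u (s J + 1) : ℝ)⁻¹ := by gcongr; exact hT.2
      _ = (q : ℝ)⁻¹ := h.mul_inv_succ_eq hu J
      _ ≤ 1 / 2 := by
          rw [one_div]
          exact inv_anti₀ two_pos (by exact_mod_cast h.one_lt hu)
  obtain ⟨z, hz⟩ := exists_mul_sum_neg_one_pow_mul_inv_eq_intCast hdiv
  have hx : (m : ℤ) • (altSeries u s : AddCircle (1 : ℝ)) =
      ((z + (-1) ^ J * (m * T) : ℝ) : AddCircle (1 : ℝ)) := by
    rw [← AddCircle.coe_zsmul, zsmul_eq_mul, altSeries,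
      tsum_neg_one_pow_mul_eq_sum_add (h.summable hu hdvd) J, mul_add, Int.cast_natCast, hz,
      mul_left_comm]
  rw [hx, AddCircle.norm_coe_intCast_add_neg_one_pow_mul z J
    (mul_nonneg (Nat.cast_nonneg m) hT0) hmT]
  exact ⟨mul_le_mul_of_nonneg_left hT.1 (Nat.cast_nonneg m),
    mul_le_mul_of_nonneg_left hT.2 (Nat.cast_nonneg m)⟩

theorem norm_zsmul_le_of_le {n J : ℕ} (hJ : ∀ k < J, s k < n) (hn : n ≤ s J) :
    ‖(u n : ℤ) • (altSeries u s : AddCircle (1 : ℝ))‖ ≤ u n * (u (s J + 1) : ℝ)⁻¹ :=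
  (h.norm_zsmul_mem_Icc hu hdvd
    (fun k hk => Nat.rel_of_forall_rel_succ_of_le (· ∣ ·) hdvd (hJ k hk)) (hu.monotone hn)).2

theorem norm_zsmul_le (n : ℕ) :
    ‖(u n : ℤ) • (altSeries u s : AddCircle (1 : ℝ))‖ ≤ (q : ℝ)⁻¹ := by
  obtain ⟨J, hJ, hn⟩ := h.strictMono.exists_forall_lt_and_le n
  calc _ ≤ u n * (u (s J + 1) : ℝ)⁻¹ := h.norm_zsmul_le_of_le hu hdvd hJ hn
    _ ≤ u (s J) * (u (s J + 1) : ℝ)⁻¹ := by gcongr; exact hu.monotone hn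
    _ = (q : ℝ)⁻¹ := h.mul_inv_succ_eq hu J

theorem norm_zsmul_le_of_notMem {n : ℕ} (hn : n ∉ Set.range s) :
    ‖(u n : ℤ) • (altSeries u s : AddCircle (1 : ℝ))‖ ≤ (2 * q : ℝ)⁻¹ := by
  obtain ⟨J, hJ, hnJ⟩ := h.strictMono.exists_forall_lt_and_le n
  have hlt : n < s J := hnJ.lt_of_ne fun he => hn ⟨J, he.symm⟩
  have h2 : (2 * u n : ℝ) ≤ u (s J) := by
    exact_mod_cast (two_mul_le_succ_of_dvd hu hdvd n).trans (hu.monotone hlt)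
  calc _ ≤ u n * (u (s J + 1) : ℝ)⁻¹ := h.norm_zsmul_le_of_le hu hdvd hJ hnJ
    _ = 2 * u n * (u (s J + 1) : ℝ)⁻¹ / 2 := by ring
    _ ≤ u (s J) * (u (s J + 1) : ℝ)⁻¹ / 2 := by gcongr
    _ = (2 * q : ℝ)⁻¹ := by rw [h.mul_inv_succ_eq hu J, mul_inv]; ring

theorem le_norm_zsmul (J : ℕ) :
    (1 - (1 / 2) ^ (J + 2)) * (q : ℝ)⁻¹ ≤
      ‖(u (s J) : ℤ) • (altSeries u s : AddCircle (1 : ℝ))‖ := by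
  refine le_trans ?_ (h.norm_zsmul_mem_Icc hu hdvd
    (fun k hk => Nat.rel_of_forall_rel_succ_of_le (· ∣ ·) hdvd (h.strictMono hk)) le_rfl).1
  rw [mul_sub, h.mul_inv_succ_eq hu J, sub_mul, one_mul]
  refine sub_le_sub_left ?_ _
  calc (u (s J) : ℝ) * (u (s (J + 1) + 1) : ℝ)⁻¹
      ≤ u (s J) * ((1 / 2) ^ (J + 2) * (u (s J + 1) : ℝ)⁻¹) := by
        gcongr; exact h.inv_succ_le hu hdvd J
    _ = (1 / 2) ^ (J + 2) * (q : ℝ)⁻¹ := by rw [← h.mul_inv_succ_eq hu J]; ring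

theorem iSup_norm_zsmul :
    ⨆ n, ‖(u n : ℤ) • (altSeries u s : AddCircle (1 : ℝ))‖ = (q : ℝ)⁻¹ := by
  have hbdd : BddAbove (Set.range fun n => ‖(u n : ℤ) • (altSeries u s : AddCircle (1 : ℝ))‖) :=
    ⟨_, Set.forall_mem_range.2 (h.norm_zsmul_le hu hdvd)⟩
  have hpow : Tendsto (fun J : ℕ => (1 / 2 : ℝ) ^ (J + 2)) atTop (𝓝 0) :=
    (tendsto_pow_atTop_nhds_zero_of_lt_one (by norm_num) (by norm_num)).comp
      (tendsto_add_atTop_nat 2)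
  have hlim : Tendsto (fun J : ℕ => (1 - (1 / 2 : ℝ) ^ (J + 2)) * (q : ℝ)⁻¹) atTop
      (𝓝 (q : ℝ)⁻¹) := by
    simpa using ((tendsto_const_nhds (x := (1 : ℝ))).sub hpow).mul_const (q : ℝ)⁻¹
  exact le_antisymm (ciSup_le (h.norm_zsmul_le hu hdvd)) (le_of_tendsto' hlim fun J =>
    (h.le_norm_zsmul hu hdvd J).trans (le_ciSup hbdd (s J)))

theorem max_norm_eq :
    max ‖(altSeries u s : AddCircle (1 : ℝ))‖
      (⨆ n, ‖(u n : ℤ) • (altSeries u s : AddCircle (1 : ℝ))‖) = (q : ℝ)⁻¹ := by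
  rw [h.iSup_norm_zsmul hu hdvd, max_eq_right]
  have h1 := (h.norm_zsmul_mem_Icc hu hdvd (m := 1) (J := 0) (by simp) (h.pos hu 0)).2
  rw [Nat.cast_one, one_zsmul, Nat.cast_one] at h1
  calc _ ≤ 1 * (u (s 0 + 1) : ℝ)⁻¹ := h1
    _ ≤ u (s 0) * (u (s 0 + 1) : ℝ)⁻¹ := by gcongr; exact_mod_cast h.pos hu 0
    _ = (q : ℝ)⁻¹ := h.mul_inv_succ_eq hu 0

theorem range_eq :
    Set.range s = {n | (2 * q : ℝ)⁻¹ < ‖(u n : ℤ) • (altSeries u s : AddCircle (1 : ℝ))‖} := by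
  ext n
  refine ⟨?_, fun hn => by_contra fun hn' => (h.norm_zsmul_le_of_notMem hu hdvd hn').not_gt hn⟩
  rintro ⟨J, rfl⟩
  refine lt_of_lt_of_le ?_ (h.le_norm_zsmul hu hdvd J)
  have hq : (0 : ℝ) < (q : ℝ)⁻¹ := inv_pos.2 (by exact_mod_cast (h.one_lt hu).pos)
  have hJ : (1 / 2 : ℝ) ^ (J + 2) ≤ (1 / 2) ^ 2 :=
    pow_le_pow_of_le_one (by norm_num) (by norm_num) (by omega)
  rw [mul_inv]
  nlinarith

end IsSparseSelection

open Classical in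
noncomputable def pickFromPairs (e : ℕ → ℕ) (A : Set ℕ) (k : ℕ) : ℕ :=
  e (2 * k + if k ∈ A then 1 else 0)

theorem pickFromPairs_injective {e : ℕ → ℕ} (he : Function.Injective e) :
    Function.Injective fun A => Set.range (pickFromPairs e A) := by
  intro A B hAB
  have key (C : Set ℕ) (k : ℕ) : k ∈ C ↔ e (2 * k + 1) ∈ Set.range (pickFromPairs e C) := by
    refine ⟨fun hk => ⟨k, by simp [pickFromPairs, hk]⟩, fun ⟨j, hj⟩ => ?_⟩
    have := he hj
    by_cases hjC : j ∈ C
    · simp only [hjC, if_true] at this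
      rwa [show k = j by omega]
    · simp only [hjC, if_false] at this
      omega
  ext k
  rw [key A, key B]
  exact Iff.of_eq (congrArg (e (2 * k + 1) ∈ ·) hAB)

theorem IsSparseSelection.pickFromPairs {u : ℕ → ℕ} {q : ℕ} {e : ℕ → ℕ}
    (h : IsSparseSelection u q e) (A : Set ℕ) :
    IsSparseSelection u q (_root_.pickFromPairs e A) where
  succ_eq_mul k := h.succ_eq_mul _
  add_le k := by
    have hmono := h.strictMono.monotone
    have h1 : _root_.pickFromPairs e A k ≤ e (2 * k + 1) := hmono (by split <;> omega)
    have h2 : e (2 * k + 2) ≤ _root_.pickFromPairs e A (k + 1) := hmono (by split <;> omega)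
    have h3 : e (2 * k + 1) + (2 * k + 1) + 2 ≤ e (2 * k + 2) := h.add_le (2 * k + 1)
    omega

theorem exists_isSparseSelection {u : ℕ → ℕ} {q : ℕ} (hdvd : ∀ n, u n ∣ u (n + 1))
    (hinf : {m : ℕ | u (m + 1) / u m = q}.Infinite) : ∃ e, IsSparseSelection u q e := by
  choose f hf hlt using hinf.exists_gt
  let e : ℕ → ℕ := fun k => Nat.rec (f 0) (fun k ek => f (ek + k + 1)) k
  refine ⟨e, fun k => Nat.eq_mul_of_div_eq_right (hdvd _) ?_, fun k => hlt _⟩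
  cases k <;> exact hf _

theorem sphere_continuum_of_unbounded_gaps_general (u : ℕ → ℕ) (hu : StrictMono u)
    (hdvd : ∀ n, u n ∣ u (n + 1))
    (q : ℕ)
    (hinf : {m : ℕ | u (m + 1) / u m = q}.Infinite) :
    Cardinal.mk {x : AddCircle (1 : ℝ) |
        max ‖x‖ (⨆ n : ℕ, ‖(u n : ℤ) • x‖) = 1 / q} = Cardinal.continuum := by
  obtain ⟨e, he⟩ := exists_isSparseSelection hdvd hinf
  set S := {x : AddCircle (1 : ℝ) | max ‖x‖ (⨆ n : ℕ, ‖(u n : ℤ) • x‖) = 1 / q}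
  have hmem (A : Set ℕ) : (altSeries u (pickFromPairs e A) : AddCircle (1 : ℝ)) ∈ S := by
    simpa [S, one_div] using (he.pickFromPairs A).max_norm_eq hu hdvd
  refine le_antisymm ?_ ?_
  · calc #S ≤ #(AddCircle (1 : ℝ)) := mk_subtype_le _
      _ ≤ #ℝ := mk_le_of_surjective QuotientAddGroup.mk_surjective
      _ = 𝔠 := mk_real
  · calc 𝔠 = #(Set ℕ) := by rw [mk_set, mk_nat, two_power_aleph0]
      _ ≤ #S := mk_le_of_injective (f := fun A => ⟨_, hmem A⟩) fun A B hAB =>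
        pickFromPairs_injective he.strictMono.injective <| by
          have hx : (altSeries u (pickFromPairs e A) : AddCircle (1 : ℝ)) =
              altSeries u (pickFromPairs e B) := congrArg Subtype.val hAB
          simp only [(he.pickFromPairs _).range_eq hu hdvd, hx]

/-- Proposition C(a): for an a-sequence `u` with bounded ratios, with
`q = limsup q_n` (so `q_n ≤ q` eventually and `S* = {m : q_m = q}` is infinite)
and with unbounded gaps in `S*`, there are continuum many `x ∈ 𝕋` with
`ρ_u(x,0) = 1/q`, where `ρ_u(x,0) = sup{‖x‖, sup_n ‖u_n x‖}`. -/
theorem sphere_continuum_of_unbounded_gaps (u : ℕ → ℕ) (hu : StrictMono u)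
    (hpos : 1 ≤ u 0) (hdvd : ∀ n, u n ∣ u (n + 1))
    (q : ℕ) (hq2 : 2 ≤ q)
    (hev : ∀ᶠ n in atTop, u (n + 1) / u n ≤ q)
    (hinf : {m : ℕ | u (m + 1) / u m = q}.Infinite)
    (hgaps : ∀ d : ℕ, ∃ a b : ℕ, u (a + 1) / u a = q ∧ u (b + 1) / u b = q ∧
        a < b ∧ d ≤ b - a ∧
        ∀ c : ℕ, a < c → c < b → u (c + 1) / u c ≠ q) :
    Cardinal.mk {x : AddCircle (1 : ℝ) |
        max ‖x‖ (⨆ n : ℕ, ‖(u n : ℤ) • x‖) = 1 / q} = Cardinal.continuum :=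
  sphere_continuum_of_unbounded_gaps_general u hu hdvd q hinf
end
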